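/- arXiv:2012.06840 — 6 statements merged into one kernel-verified Lean document; each statement's English description precedes it below -/
import Mathlib

section
/- For every n ≥ 2, the prefix of length n of the period-doubling sequence has a string attractor of size 2, and 2 is the minimum possible size. -/
def IsAttractor {α : Type*} (w : ℕ → α) (n : ℕ) (S : Finset ℕ) : Prop :=
  (∀ s ∈ S, s < n) ∧
  ∀ i j : ℕ, i ≤ j → j < n →
    ∃ i' j' : ℕ, i' ≤ j' ∧ j' < n ∧ j' - i' = j - i ∧
      (∀ t, t ≤ j - i → w (i' + t) = w (i + t)) ∧
      ∃ s ∈ S, i' ≤ s ∧ s ≤ j'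

def pdStep : ℕ → List ℕ
  | 1 => [1, 0]
  | _ => [1, 1]

def pdIter : ℕ → List ℕ
  | 0 => [1]
  | k + 1 => (pdIter k).flatMap pdStep

/-- The period-doubling sequence: fixed point, starting with 1, of 1 → 10, 0 → 11. -/
def pd (n : ℕ) : ℕ := (pdIter (n + 1)).getD n 0

lemma pdStep_eq (a : ℕ) : pdStep a = [1, if a = 1 then 0 else 1] := by
  match a with
  | 0 => rfl
  | 1 => rfl
  | (n+2) => rfl

lemma flatMap_getD (l : List ℕ) : ∀ n, n < l.length →
    (l.flatMap pdStep).getD (2*n) 0 = 1 ∧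
    (l.flatMap pdStep).getD (2*n+1) 0 = (if l.getD n 0 = 1 then 0 else 1) := by
  induction l with
  | nil => intro n hn; simp at hn
  | cons a tl ih =>
    intro n hn
    rw [List.flatMap_cons, pdStep_eq]
    simp only [List.cons_append, List.nil_append]
    cases n with
    | zero =>
      constructor <;> simp [List.getD_cons_zero, List.getD_cons_succ]
    | succ m =>
      have h1 : 2*(m+1) = 2*m+1+1 := by ring
      rw [h1]
      simp only [List.getD_cons_succ]
      exact ih m (by simp only [List.length_cons] at hn; omega)

lemma flatMap_length (l : List ℕ) : (l.flatMap pdStep).length = 2 * l.length := by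
  induction l with
  | nil => simp
  | cons a tl ih =>
    rw [List.flatMap_cons, pdStep_eq]
    simp only [List.length_append, List.length_cons, List.length_nil, ih]
    omega

lemma pdIter_length (k : ℕ) : (pdIter k).length = 2^k := by
  induction k with
  | zero => rfl
  | succ m ih =>
    show ((pdIter m).flatMap pdStep).length = 2^(m+1)
    rw [flatMap_length, ih, pow_succ]
    ring

lemma pdIter_prefix (k : ℕ) : pdIter k <+: pdIter (k+1) := by
  induction k with
  | zero => exact ⟨[0], rfl⟩
  | succ m ih =>
    obtain ⟨r, hr⟩ := ih
    refine ⟨r.flatMap pdStep, ?_⟩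
    calc pdIter (m+1) ++ r.flatMap pdStep
        = (pdIter m).flatMap pdStep ++ r.flatMap pdStep := rfl
      _ = (pdIter m ++ r).flatMap pdStep := by rw [List.flatMap_append]
      _ = (pdIter (m+1)).flatMap pdStep := by rw [← hr]
      _ = pdIter (m+1+1) := rfl

lemma pdIter_prefix_le {k k' : ℕ} (h : k ≤ k') : pdIter k <+: pdIter k' := by
  induction k', h using Nat.le_induction with
  | base => exact List.prefix_refl _
  | succ m hm ih => exact ih.trans (pdIter_prefix m)

lemma getD_prefix {l₁ l₂ : List ℕ} (h : l₁ <+: l₂) {n : ℕ} (hn : n < l₁.length) :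
    l₂.getD n 0 = l₁.getD n 0 := by
  obtain ⟨r, rfl⟩ := h
  exact List.getD_append _ _ _ _ hn

lemma pd_eq_iter {n k : ℕ} (h : n < 2^k) : pd n = (pdIter k).getD n 0 := by
  have hlt : n < (pdIter k).length := by rw [pdIter_length]; exact h
  have hn1 : n < (pdIter (n+1)).length := by
    rw [pdIter_length]
    have h1 : n < 2^n := Nat.lt_two_pow_self (n := n)
    have h2 : (2:ℕ)^(n+1) = 2*2^n := by ring
    omega
  show (pdIter (n+1)).getD n 0 = _
  rcases le_total k (n+1) with hk | hk
  · rw [getD_prefix (pdIter_prefix_le hk) hlt]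
  · rw [getD_prefix (pdIter_prefix_le hk) hn1]

lemma pd_even (m : ℕ) : pd (2*m) = 1 := by
  have h1 : m < 2^m := Nat.lt_two_pow_self (n := m)
  have h2 : (2:ℕ)^(m+2) = 4*2^m := by ring
  have h3 : (2:ℕ)^(m+1) = 2*2^m := by ring
  rw [pd_eq_iter (show 2*m < 2^(m+2) by omega)]
  have hrw : pdIter (m+2) = (pdIter (m+1)).flatMap pdStep := rfl
  rw [hrw]
  exact (flatMap_getD (pdIter (m+1)) m (by rw [pdIter_length]; omega)).1

lemma pd_odd (m : ℕ) : pd (2*m+1) = if pd m = 1 then 0 else 1 := by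
  have h1 : m < 2^m := Nat.lt_two_pow_self (n := m)
  have h2 : (2:ℕ)^(m+2) = 4*2^m := by ring
  have h3 : (2:ℕ)^(m+1) = 2*2^m := by ring
  rw [pd_eq_iter (show 2*m+1 < 2^(m+2) by omega)]
  have hrw : pdIter (m+2) = (pdIter (m+1)).flatMap pdStep := rfl
  rw [hrw]
  rw [(flatMap_getD (pdIter (m+1)) m (by rw [pdIter_length]; omega)).2]
  rw [pd_eq_iter (show m < 2^(m+1) by omega)]

lemma pd_even' {m : ℕ} (h : m % 2 = 0) : pd m = 1 := by
  obtain ⟨k, rfl⟩ : ∃ k, m = 2*k := ⟨m/2, by omega⟩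
  exact pd_even k

lemma pd_odd' {m : ℕ} (h : m % 2 = 1) : pd m = if pd (m/2) = 1 then 0 else 1 := by
  obtain ⟨k, rfl⟩ : ∃ k, m = 2*k+1 := ⟨m/2, by omega⟩
  rw [pd_odd]
  have e : (2*k+1)/2 = k := by omega
  rw [e]

lemma pd_le_one (m : ℕ) : pd m ≤ 1 := by
  rcases Nat.even_or_odd m with he | ho
  · obtain ⟨k, hk⟩ := he
    rw [show m = 2*k by omega, pd_even]
  · obtain ⟨k, hk⟩ := ho
    rw [show m = 2*k+1 by omega, pd_odd]
    split_ifs <;> omega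

lemma pd0 : pd 0 = 1 := pd_even' rfl
lemma pd1 : pd 1 = 0 := by rw [pd_odd' (by norm_num)]; norm_num [pd0]
lemma pd2 : pd 2 = 1 := pd_even' rfl
lemma pd3 : pd 3 = 1 := by rw [pd_odd' (by norm_num)]; norm_num [pd1]
lemma pd4 : pd 4 = 1 := pd_even' rfl
lemma pd5 : pd 5 = 0 := by rw [pd_odd' (by norm_num)]; norm_num [pd2]
lemma pd6 : pd 6 = 1 := pd_even' rfl
lemma pd7 : pd 7 = 0 := by rw [pd_odd' (by norm_num)]; norm_num [pd3]
lemma pd8 : pd 8 = 1 := pd_even' rfl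
lemma pd9 : pd 9 = 0 := by rw [pd_odd' (by norm_num)]; norm_num [pd4]
lemma pd10 : pd 10 = 1 := pd_even' rfl
lemma mk_self {n i j : ℕ} (S : Finset ℕ) (s : ℕ) (hij : i ≤ j) (hjn : j < n)
    (hs : s ∈ S) (h1 : i ≤ s) (h2 : s ≤ j) :
    ∃ i' j' : ℕ, i' ≤ j' ∧ j' < n ∧ j' - i' = j - i ∧
      (∀ t, t ≤ j - i → pd (i' + t) = pd (i + t)) ∧
      ∃ s ∈ S, i' ≤ s ∧ s ≤ j' :=
  ⟨i, j, hij, hjn, rfl, fun _ _ => rfl, s, hs, h1, h2⟩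

lemma mk_occ {n i j : ℕ} (S : Finset ℕ) (a s : ℕ)
    (h1 : a ≤ s) (h2 : s ≤ a + (j - i)) (h3 : a + (j - i) < n) (hs : s ∈ S)
    (hv : ∀ t, t ≤ j - i → pd (a + t) = pd (i + t)) :
    ∃ i' j' : ℕ, i' ≤ j' ∧ j' < n ∧ j' - i' = j - i ∧
      (∀ t, t ≤ j - i → pd (i' + t) = pd (i + t)) ∧
      ∃ s ∈ S, i' ≤ s ∧ s ≤ j' :=
  ⟨a, a + (j - i), Nat.le_add_right _ _, h3, by omega, hv, s, hs, h1, h2⟩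

lemma step (T L : ℕ) (hT : 1 ≤ T) (h2t : 2*T ≤ L) (hL4 : L ≤ 4*T - 1)
    (IH : ∀ m, L ≤ m → m ≤ 4*T - 1 → IsAttractor pd m {T-1, 2*T-1}) :
    ∀ n, 2*L+1 ≤ n → n ≤ 8*T - 1 → IsAttractor pd n {2*T-1, 4*T-1} := by
  intro n hn1 hn2
  constructor
  · intro s hs
    simp only [Finset.mem_insert, Finset.mem_singleton] at hs
    omega
  intro i j hij hjn
  rcases Nat.eq_or_lt_of_le hij with heq | hlt
  · -- single letter
    subst heq
    by_cases hc : pd i = pd (2*T-1)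
    · refine mk_occ _ (2*T-1) (2*T-1) le_rfl (by omega) (by omega) (by simp) ?_
      intro r hr
      have : r = 0 := by omega
      subst this
      simpa using hc.symm
    · have h4 : pd (4*T-1) = pd i := by
        have e : 4*T-1 = 2*(2*T-1)+1 := by omega
        rw [e, pd_odd]
        have u1 := pd_le_one i
        have u2 := pd_le_one (2*T-1)
        split_ifs with h
        · omega
        · omega
      refine mk_occ _ (4*T-1) (4*T-1) le_rfl (by omega) (by omega) (by simp) ?_
      intro r hr
      have : r = 0 := by omega
      subst this
      simpa using h4
  · -- i < j
    set I := i / 2 with hI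
    set J := (j-1) / 2 with hJ
    set m := max L (J+1) with hm
    have hLm : L ≤ m := by rw [hm]; exact le_max_left _ _
    have hJm : J + 1 ≤ m := by rw [hm]; exact le_max_right _ _
    have hchoice : m = L ∨ m = J + 1 := by
      rw [hm]; exact max_choice _ _
    have hm4 : m ≤ 4*T - 1 := by
      rcases hchoice with h | h <;> omega
    obtain ⟨-, H⟩ := IH m hLm hm4
    obtain ⟨p, q, hpq, hqm, hlen, hvals, s, hsS, hps, hsq⟩ :=
      H I J (by omega) (by omega)
    simp only [Finset.mem_insert, Finset.mem_singleton] at hsS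
    refine mk_occ _ (2*p + i % 2) (2*s+1) (by omega) (by omega)
      (by rcases hchoice with h | h <;> omega)
      (by simp only [Finset.mem_insert, Finset.mem_singleton]; omega) ?_
    intro r hr
    rcases Nat.even_or_odd (i + r) with he | ho
    · have h0 : (i+r) % 2 = 0 := Nat.even_iff.mp he
      rw [pd_even' (by omega), pd_even' h0]
    · have h1 : (i+r) % 2 = 1 := Nat.odd_iff.mp ho
      have hhl : (i+r)/2 - I ≤ J - I := by omega
      have hv := hvals ((i+r)/2 - I) hhl
      have e1 : p + ((i+r)/2 - I) = (2*p + i%2 + r)/2 := by omega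
      have e2 : I + ((i+r)/2 - I) = (i+r)/2 := by omega
      rw [e1, e2] at hv
      rw [pd_odd' (show (2*p + i%2 + r) % 2 = 1 by omega), pd_odd' h1, hv]
lemma baseT1 : ∀ n, 2 ≤ n → n ≤ 3 → IsAttractor pd n ({0, 1} : Finset ℕ) := by
  intro n h2 h3
  refine ⟨fun s hs => by simp only [Finset.mem_insert, Finset.mem_singleton] at hs; omega, ?_⟩
  intro i j hij hjn
  by_cases h : i ≤ 1
  · exact mk_self _ i hij hjn
      (by simp only [Finset.mem_insert, Finset.mem_singleton]; omega) le_rfl hij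
  · have h22 : i = 2 ∧ j = 2 := by omega
    obtain ⟨hi2, hj2⟩ := h22
    refine mk_occ _ 0 0 le_rfl (by omega) (by omega) (by simp) ?_
    intro r hr
    have : r = 0 := by omega
    subst this
    rw [pd_even' (by omega), pd_even' (by omega)]

lemma base_n4 : IsAttractor pd 4 ({1, 3} : Finset ℕ) := by
  refine ⟨fun s hs => by simp only [Finset.mem_insert, Finset.mem_singleton] at hs; omega, ?_⟩
  intro i j hij hjn
  by_cases hc1 : i ≤ 1 ∧ 1 ≤ j
  · exact mk_self _ 1 hij hjn (by simp) hc1.1 hc1.2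
  by_cases hc3 : j = 3
  · exact mk_self _ 3 hij hjn (by simp) (by omega) (by omega)
  · have h2 : i = j ∧ i % 2 = 0 := by omega
    obtain ⟨hii, hi2⟩ := h2
    refine mk_occ _ 3 3 le_rfl (by omega) (by omega) (by simp) ?_
    intro r hr
    have : r = 0 := by omega
    subst this
    rw [show (3:ℕ)+0 = 3 from rfl, pd3, pd_even' (by omega)]

lemma PA : ∀ k, ∀ n, 5*2^k - 1 ≤ n → n ≤ 2^(k+3) - 1 →
    IsAttractor pd n {2^(k+1) - 1, 2^(k+2) - 1} := by
  intro k
  induction k with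
  | zero =>
    intro n h1 h2
    norm_num at h1 h2 ⊢
    rcases Nat.lt_or_ge n 5 with h5 | h5
    · have hn4 : n = 4 := by omega
      subst hn4
      exact base_n4
    · have hb := step 1 2 le_rfl le_rfl (by norm_num)
        (fun m hm1 hm2 => by
          have := baseT1 m hm1 (by omega)
          simpa using this)
      have := hb n (by omega) (by omega)
      simpa using this
  | succ k ih =>
    intro n h1 h2
    have e0 : (2:ℕ)^(k+1) = 2*2^k := by ring
    have e1 : (2:ℕ)^(k+2) = 2*2^(k+1) := by ring
    have e2 : (2:ℕ)^(k+3) = 4*2^(k+1) := by ring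
    have e3 : (2:ℕ)^(k+4) = 8*2^(k+1) := by ring
    have hpos : 0 < (2:ℕ)^k := by positivity
    have hstep := step (2^(k+1)) (5*2^k - 1) (by omega) (by omega) (by omega)
      (fun m hm1 hm2 => by
        have := ih m hm1 (by omega)
        rwa [e1] at this)
    have h2' : n ≤ 2^(k+4) - 1 := h2
    have h1' : 5*2^(k+1) - 1 ≤ n := h1
    have := hstep n (by omega) (by omega)
    rwa [← e1, ← e2] at this

lemma baseB1 : ∀ n, 6 ≤ n → n ≤ 11 → IsAttractor pd n ({2, 5} : Finset ℕ) := by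
  intro n h6 h11
  refine ⟨fun s hs => by simp only [Finset.mem_insert, Finset.mem_singleton] at hs; omega, ?_⟩
  intro i j hij hjn
  by_cases hc2 : i ≤ 2 ∧ 2 ≤ j
  · exact mk_self _ 2 hij hjn (by simp) hc2.1 hc2.2
  by_cases hc5 : i ≤ 5 ∧ 5 ≤ j
  · exact mk_self _ 5 hij hjn (by simp) hc5.1 hc5.2
  · have hj10 : j ≤ 10 := by omega
    have hi10 : i ≤ 10 := by omega
    interval_cases i <;> interval_cases j <;>
      first
      | omega
      | (refine mk_occ _ 2 2 ?_ ?_ ?_ ?_ ?_ <;>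
          first
          | (intro r hr; interval_cases r <;>
              simp [pd0,pd1,pd2,pd3,pd4,pd5,pd6,pd7,pd8,pd9,pd10]; done)
          | omega
          | (simp; done))
      | (refine mk_occ _ 5 5 ?_ ?_ ?_ ?_ ?_ <;>
          first
          | (intro r hr; interval_cases r <;>
              simp [pd0,pd1,pd2,pd3,pd4,pd5,pd6,pd7,pd8,pd9,pd10]; done)
          | omega
          | (simp; done))
      | (refine mk_occ _ 4 5 ?_ ?_ ?_ ?_ ?_ <;>
          first
          | (intro r hr; interval_cases r <;>
              simp [pd0,pd1,pd2,pd3,pd4,pd5,pd6,pd7,pd8,pd9,pd10]; done)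
          | omega
          | (simp; done))

lemma PB : ∀ k, ∀ n, 7*2^k - 1 ≤ n → n ≤ 3*2^(k+2) - 1 →
    IsAttractor pd n {3*2^k - 1, 3*2^(k+1) - 1} := by
  intro k
  induction k with
  | zero =>
    intro n h1 h2
    norm_num at h1 h2 ⊢
    exact baseB1 n h1 h2
  | succ k ih =>
    intro n h1 h2
    have e0 : (2:ℕ)^(k+1) = 2*2^k := by ring
    have e1 : 3*(2:ℕ)^(k+1) = 2*(3*2^k) := by ring
    have e2 : 3*(2:ℕ)^(k+2) = 4*(3*2^k) := by ring
    have e3 : 3*(2:ℕ)^(k+3) = 8*(3*2^k) := by ring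
    have hpos : 0 < (2:ℕ)^k := by positivity
    have hstep := step (3*2^k) (7*2^k - 1) (by omega) (by omega) (by omega)
      (fun m hm1 hm2 => by
        have := ih m hm1 (by omega)
        rwa [e1] at this)
    have h2' : n ≤ 3*2^(k+3) - 1 := h2
    have h1' : 7*2^(k+1) - 1 ≤ n := h1
    have := hstep n (by omega) (by omega)
    rwa [← e1, ← e2] at this
/-- For every `n ≥ 2`, the length-`n` prefix of the period-doubling sequence has a
string attractor of size 2, and 2 is the minimum possible size. -/
theorem pd_attractor_two :
    ∀ n : ℕ, 2 ≤ n →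
      (∃ S : Finset ℕ, IsAttractor pd n S ∧ S.card = 2) ∧
      (∀ S : Finset ℕ, IsAttractor pd n S → 2 ≤ S.card) := by
  intro n hn
  constructor
  · -- existence
    by_cases h3 : n ≤ 3
    · exact ⟨{0, 1}, baseT1 n hn h3, by decide⟩
    · push_neg at h3
      have h4 : 4 ≤ n := h3
      obtain ⟨k, hk1, hk2⟩ : ∃ k, 2^k ≤ n ∧ n < 2^(k+1) :=
        ⟨Nat.log 2 n, Nat.pow_log_le_self 2 (by omega),
          Nat.lt_pow_succ_log_self (by norm_num) n⟩
      have hk4 : 2 ≤ k := by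
        rcases Nat.lt_or_ge k 2 with h | h
        · exfalso
          have : (2:ℕ)^(k+1) ≤ 2^2 := Nat.pow_le_pow_right (by norm_num) (by omega)
          norm_num at this
          omega
        · exact h
      by_cases hA : 5*2^(k-2) - 1 ≤ n
      · obtain ⟨d, rfl⟩ : ∃ d, k = d + 2 := ⟨k - 2, by omega⟩
        have hA' : 5*2^d - 1 ≤ n := by simpa using hA
        have hk2' : n < 2^(d+3) := hk2
        refine ⟨_, PA d n hA' (by omega), ?_⟩
        have hpos : 0 < (2:ℕ)^(d+1) := by positivity
        have e : (2:ℕ)^(d+2) = 2*2^(d+1) := by ring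
        exact Finset.card_pair (by omega)
      · have hk5 : 3 ≤ k := by
          rcases Nat.lt_or_ge k 3 with h | h
          · exfalso
            have hk22 : k = 2 := by omega
            subst hk22
            simp at hA
            omega
          · exact h
        obtain ⟨d, rfl⟩ : ∃ d, k = d + 3 := ⟨k - 3, by omega⟩
        have hA' : ¬(5*2^(d+1) - 1 ≤ n) := by
          have e : d + 3 - 2 = d + 1 := by omega
          rwa [e] at hA
        have hk1' : 2^(d+3) ≤ n := hk1
        have e8 : (2:ℕ)^(d+3) = 8*2^d := by ring
        have e4 : (2:ℕ)^(d+2) = 4*2^d := by ring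
        have e2 : (2:ℕ)^(d+1) = 2*2^d := by ring
        have hpos : 0 < (2:ℕ)^d := by positivity
        refine ⟨_, PB d n (by omega) (by omega), ?_⟩
        exact Finset.card_pair (by omega)
  · -- lower bound
    intro S hS
    obtain ⟨hlt, H⟩ := hS
    obtain ⟨i0, j0, h00, hj0n, hlen0, hv0, s0, hs0, ha0, hb0⟩ :=
      H 0 0 le_rfl (by omega)
    obtain ⟨i1, j1, h10, hj1n, hlen1, hv1, s1, hs1, ha1, hb1⟩ :=
      H 1 1 le_rfl (by omega)
    have e0 : pd i0 = 1 := by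
      have := hv0 0 (by omega)
      simpa [pd0] using this
    have e1 : pd i1 = 0 := by
      have := hv1 0 (by omega)
      simpa [pd1] using this
    have hs00 : s0 = i0 := by omega
    have hs11 : s1 = i1 := by omega
    have hne : s0 ≠ s1 := by
      intro hE
      rw [hs00, hs11] at hE
      rw [hE] at e0
      omega
    exact Finset.one_lt_card.mpr ⟨s0, hs0, s1, hs1, hne⟩
end

section
/- For every finite word w, δ(w) ≤ γ(w), where δ(w) = max over 1 ≤ i ≤ |w| of ρ_i(w)/i with ρ_i(w) the number of distinct length-i factors of w, and γ(w) is the minimum string attractor size of w. -/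
/-- The set of distinct length-`i` factors of the word `w[0..n-1]`. -/
def factors {α : Type*} [DecidableEq α] (w : ℕ → α) (n i : ℕ) : Finset (List α) :=
  (Finset.range (n + 1 - i)).image (fun j => List.ofFn (fun t : Fin i => w (j + t)))

/-- The minimum size of a string attractor of `w[0..n-1]`. -/
noncomputable def gamma {α : Type*} (w : ℕ → α) (n : ℕ) : ℕ :=
  sInf {k | ∃ S : Finset ℕ, IsAttractor w n S ∧ S.card = k}

lemma attractor_exists {α : Type*} (w : ℕ → α) (n : ℕ) :
    IsAttractor w n (Finset.range n) := by
  refine ⟨fun s hs => Finset.mem_range.mp hs, fun i j hij hjn => ?_⟩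
  exact ⟨i, j, hij, hjn, rfl, fun t _ => rfl, j, Finset.mem_range.mpr hjn, hij, le_refl j⟩

lemma card_factors_le {α : Type*} [DecidableEq α] (w : ℕ → α) (n i : ℕ)
    (hi : 1 ≤ i) (hin : i ≤ n) (S : Finset ℕ) (hS : IsAttractor w n S) :
    (factors w n i).card ≤ S.card * i := by
  have hsub : factors w n i ⊆ (S ×ˢ Finset.range i).image
      (fun p : ℕ × ℕ => List.ofFn (fun t : Fin i => w (p.1 - p.2 + t))) := by
    intro x hx
    simp only [factors, Finset.mem_image, Finset.mem_range] at hx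
    obtain ⟨j, hj, rfl⟩ := hx
    have hjlt : j + (i - 1) < n := by omega
    obtain ⟨i', j', hij', hj'n, hdiff, heq, s, hsS, hi's, hsj'⟩ :=
      hS.2 j (j + (i - 1)) (by omega) hjlt
    have hdiff' : j' - i' = i - 1 := by omega
    refine Finset.mem_image.mpr ⟨(s, s - i'), Finset.mem_product.mpr
      ⟨hsS, Finset.mem_range.mpr (by omega)⟩, ?_⟩
    have hsi' : s - (s - i') = i' := by omega
    simp only [hsi']
    congr 1
    funext t
    exact heq t (by omega)
  calc (factors w n i).card ≤ _ := Finset.card_le_card hsub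
    _ ≤ (S ×ˢ Finset.range i).card := Finset.card_image_le
    _ = S.card * i := by rw [Finset.card_product, Finset.card_range]

/-- `δ(w) ≤ γ(w)`: for every `1 ≤ i ≤ n`, `ρ_i(w)/i ≤ γ(w)`, where `ρ_i` counts
distinct length-`i` factors. -/
theorem delta_le_gamma {α : Type*} [DecidableEq α] (w : ℕ → α) (n : ℕ) :
    ∀ i : ℕ, 1 ≤ i → i ≤ n →
      ((factors w n i).card : ℚ) / i ≤ (gamma w n : ℚ) := by
  intro i hi hin
  have hne : {k | ∃ S : Finset ℕ, IsAttractor w n S ∧ S.card = k}.Nonempty :=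
    ⟨(Finset.range n).card, Finset.range n, attractor_exists w n, rfl⟩
  obtain ⟨S, hS, hcard⟩ := Nat.sInf_mem hne
  have hkey : (factors w n i).card ≤ gamma w n * i := by
    rw [gamma, ← hcard]; exact card_factors_le w n i hi hin S hS
  rw [div_le_iff₀ (by exact_mod_cast hi)]
  exact_mod_cast hkey
end

section
/- Let p be the characteristic sequence of powers of 2 as an infinite binary word. Every string attractor of the prefix p[0..n-1] has size Ω(log n); more precisely, the factors 1 0^{2^{2k}-1} 1 for varying k each have a unique occurrence in p, and these occurrences are pairwise disjoint, forcing Ω(log n) distinct attractor indices for the length-n prefix. -/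
open Classical in
/-- The characteristic sequence of powers of 2: `p 0 = 1` and, for `n ≥ 1`,
`p n = 1` iff `n - 1` is a power of 2. -/
noncomputable def p (n : ℕ) : ℕ := if n = 0 ∨ ∃ k, n = 2 ^ k + 1 then 1 else 0

/-- `occFactor k a` says that the factor `1 0^(2^(2k) - 1) 1` occurs in `p`
starting at position `a`. -/
def occFactor (k a : ℕ) : Prop :=
  p a = 1 ∧ (∀ t, 0 < t → t < 2 ^ (2 * k) → p (a + t) = 0) ∧ p (a + 2 ^ (2 * k)) = 1

lemma p_eq_one_iff (n : ℕ) : p n = 1 ↔ n = 0 ∨ ∃ k, n = 2 ^ k + 1 := by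
  unfold p; split <;> simp_all

lemma p_eq_zero_iff (n : ℕ) : p n = 0 ↔ ¬(n = 0 ∨ ∃ k, n = 2 ^ k + 1) := by
  unfold p; split <;> simp_all

lemma no_pow_between {j m : ℕ} (h1 : 2 ^ j < 2 ^ m) (h2 : 2 ^ m < 2 ^ (j + 1)) : False := by
  have a1 := (Nat.pow_lt_pow_iff_right (a := 2) one_lt_two).mp h1
  have a2 := (Nat.pow_lt_pow_iff_right (a := 2) one_lt_two).mp h2
  omega

lemma occFactor_of (k : ℕ) : occFactor k (2 ^ (2 * k) + 1) := by
  have hpow : 2 ^ (2 * k + 1) = 2 * 2 ^ (2 * k) := by rw [pow_succ]; ring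
  refine ⟨(p_eq_one_iff _).mpr (Or.inr ⟨2 * k, rfl⟩), ?_, ?_⟩
  · intro t ht1 ht2
    rw [p_eq_zero_iff]
    rintro (h | ⟨m, hm⟩)
    · omega
    · have : 2 ^ (2 * k) + t = 2 ^ m := by omega
      exact no_pow_between (j := 2 * k) (m := m) (by omega) (by rw [pow_succ]; omega)
  · have : 2 ^ (2 * k) + 1 + 2 ^ (2 * k) = 2 ^ (2 * k + 1) + 1 := by omega
    rw [this, p_eq_one_iff]
    exact Or.inr ⟨2 * k + 1, rfl⟩

lemma occFactor_iff (k a : ℕ) : occFactor k a ↔ a = 2 ^ (2 * k) + 1 := by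
  constructor
  · rintro ⟨h1, h2, h3⟩
    have hpos : 0 < 2 ^ (2 * k) := Nat.two_pow_pos _
    rcases (p_eq_one_iff _).mp h1 with rfl | ⟨j, rfl⟩
    · -- a = 0 : contradiction
      exfalso
      rcases Nat.eq_zero_or_pos k with rfl | hk
      · -- k = 0 : p 1 = 1, impossible
        simp only [mul_zero, pow_zero] at h3
        rcases (p_eq_one_iff _).mp h3 with h | ⟨m, hm⟩
        · omega
        · have := Nat.two_pow_pos m; omega
      · -- k ≥ 1 : p 2 = 0 from interior, but p 2 = 1
        have h4 : 4 ≤ 2 ^ (2 * k) := by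
          calc 4 = 2 ^ 2 := by norm_num
          _ ≤ 2 ^ (2 * k) := Nat.pow_le_pow_right (by norm_num) (by omega)
        have := h2 2 (by norm_num) (by omega)
        rw [show (0 + 2 : ℕ) = 2 ^ 0 + 1 by norm_num, p_eq_zero_iff] at this
        exact this (Or.inr ⟨0, rfl⟩)
    · -- a = 2^j + 1
      rcases (p_eq_one_iff _).mp h3 with h | ⟨m, hm⟩
      · have hne : 0 < 2 ^ j + 1 + 2 ^ (2 * k) := by positivity
        exact absurd h hne.ne'
      · have hsum : 2 ^ j + 2 ^ (2 * k) = 2 ^ m := by omega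
        have hjp : 0 < 2 ^ j := Nat.two_pow_pos _
        have hj : j = 2 * k := by
          by_contra hne
          rcases Nat.lt_or_ge j (2 * k) with hlt | hge
          · have hstrict : 2 ^ j < 2 ^ (2 * k) :=
              Nat.pow_lt_pow_right one_lt_two hlt
            refine no_pow_between (j := 2 * k) (m := m) ?_ ?_
            · rw [← hsum]; exact Nat.lt_add_of_pos_left hjp
            · rw [← hsum]
              calc 2 ^ j + 2 ^ (2 * k) < 2 ^ (2 * k) + 2 ^ (2 * k) :=
                    Nat.add_lt_add_right hstrict _
                _ = 2 ^ (2 * k + 1) := by rw [pow_succ]; ring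
          · have hgt : 2 * k < j := by omega
            have hstrict : 2 ^ (2 * k) < 2 ^ j :=
              Nat.pow_lt_pow_right one_lt_two hgt
            refine no_pow_between (j := j) (m := m) ?_ ?_
            · rw [← hsum]
              exact Nat.lt_add_of_pos_right hpos
            · rw [← hsum]
              calc 2 ^ j + 2 ^ (2 * k) < 2 ^ j + 2 ^ j :=
                    Nat.add_lt_add_left hstrict _
                _ = 2 ^ (j + 1) := by rw [pow_succ]; ring
        rw [hj]
  · rintro rfl; exact occFactor_of k

lemma attractor_hit {n : ℕ} {S : Finset ℕ} (hS : IsAttractor p n S) (k : ℕ)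
    (hk : 2 ^ (2 * k + 1) + 1 < n) :
    ∃ s ∈ S, 2 ^ (2 * k) + 1 ≤ s ∧ s ≤ 2 ^ (2 * k + 1) + 1 := by
  have hpow : 2 ^ (2 * k + 1) = 2 * 2 ^ (2 * k) := by rw [pow_succ]; ring
  set i := 2 ^ (2 * k) + 1 with hi
  set j := 2 ^ (2 * k + 1) + 1 with hj
  have hij : i ≤ j := by omega
  have hdiff : j - i = 2 ^ (2 * k) := by omega
  obtain ⟨i', j', hij', hj'n, hlen, hcontent, s, hsS, hsi, hsj⟩ := hS.2 i j hij hk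
  have hocc := occFactor_of k
  have hocc' : occFactor k i' := by
    refine ⟨?_, ?_, ?_⟩
    · have := hcontent 0 (by omega)
      simpa using this.trans hocc.1
    · intro t ht1 ht2
      have := hcontent t (by omega)
      rw [this]
      exact hocc.2.1 t ht1 ht2
    · have := hcontent (2 ^ (2 * k)) (by omega)
      rw [this]
      exact hocc.2.2
  have hi' : i' = 2 ^ (2 * k) + 1 := (occFactor_iff k i').mp hocc'
  have hj' : j' = 2 ^ (2 * k + 1) + 1 := by omega
  exact ⟨s, hsS, by omega, by omega⟩

lemma attractor_nonempty {n : ℕ} {S : Finset ℕ} (hS : IsAttractor p n S)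
    (hn : 0 < n) : 1 ≤ S.card := by
  obtain ⟨_, _, _, _, _, _, s, hsS, _⟩ := hS.2 0 0 le_rfl hn
  exact Finset.card_pos.mpr ⟨s, hsS⟩

open Classical in
lemma attractor_count {n : ℕ} {S : Finset ℕ} (hS : IsAttractor p n S) :
    Nat.log 2 n / 2 ≤ S.card := by
  rcases Nat.eq_zero_or_pos n with rfl | hn
  · simp
  set L := Nat.log 2 n with hL
  set f : ℕ → ℕ := fun k =>
    if h : ∃ s ∈ S, 2 ^ (2 * k) + 1 ≤ s ∧ s ≤ 2 ^ (2 * k + 1) + 1 then h.choose else 0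
    with hf
  have hfspec : ∀ k, 2 ^ (2 * k + 1) + 1 < n →
      f k ∈ S ∧ 2 ^ (2 * k) + 1 ≤ f k ∧ f k ≤ 2 ^ (2 * k + 1) + 1 := by
    intro k hk
    have h := attractor_hit hS k hk
    rw [hf]
    simp only [dif_pos h]
    obtain ⟨hs1, hs2⟩ := h.choose_spec
    exact ⟨hs1, hs2⟩
  have hvalid : ∀ k, k < L / 2 → 2 ^ (2 * k + 1) + 1 < n := by
    intro k hk
    have h1 : 2 * k + 2 ≤ L := by omega
    have h2 : (2 : ℕ) ^ (2 * k + 2) ≤ 2 ^ L := Nat.pow_le_pow_right (by norm_num) h1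
    have h3 : (2 : ℕ) ^ L ≤ n := Nat.pow_log_le_self 2 hn.ne'
    have h4 : (2 : ℕ) ^ (2 * k + 2) = 2 * 2 ^ (2 * k + 1) := by rw [pow_succ]; ring
    have h5 : 0 < 2 ^ (2 * k + 1) := Nat.two_pow_pos _
    omega
  have hcard : (Finset.range (L / 2)).card ≤ S.card := by
    apply Finset.card_le_card_of_injOn f
    · intro k hk
      rw [Finset.mem_coe, Finset.mem_range] at hk
      exact (hfspec k (hvalid k hk)).1
    · intro k hk k' hk' hfe
      rw [Finset.coe_range, Set.mem_Iio] at hk hk'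
      by_contra hne
      have key : ∀ a b : ℕ, a < L / 2 → b < L / 2 → a < b → f a ≠ f b := by
        intro a b ha hb hab
        have h1 := (hfspec a (hvalid a ha)).2.2
        have h2 := (hfspec b (hvalid b hb)).2.1
        have h3 : 2 ^ (2 * a + 1) < 2 ^ (2 * b) :=
          Nat.pow_lt_pow_right one_lt_two (by omega)
        omega
      rcases Nat.lt_or_ge k k' with h | h
      · exact key k k' hk hk' h hfe
      · exact key k' k hk' hk (by omega) hfe.symm
  simpa using hcard

lemma nat_log_bound (L c : ℕ) (h1 : 1 ≤ c) (h2 : L / 2 ≤ c) : L + 1 ≤ 8 * c := by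
  omega

/-- The factors `1 0^(2^(2k)-1) 1` each occur exactly once in `p`, their
occurrences are pairwise disjoint, and consequently every string attractor of
the length-`n` prefix of `p` has size `Ω(log n)`. -/
theorem p_attractor_lower_bound :
    (∀ k : ℕ, ∃! a : ℕ, occFactor k a) ∧
    (∀ k k' a a' : ℕ, k < k' → occFactor k a → occFactor k' a' →
      a + 2 ^ (2 * k) < a') ∧
    ∃ c : ℝ, 0 < c ∧ ∀ n : ℕ, ∀ S : Finset ℕ, IsAttractor p n S →
      c * Real.log n ≤ S.card := by
  refine ⟨?_, ?_, ?_⟩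
  · intro k
    exact ⟨2 ^ (2 * k) + 1, occFactor_of k, fun a ha => (occFactor_iff k a).mp ha⟩
  · intro k k' a a' hkk ha ha'
    rw [occFactor_iff] at ha ha'
    subst ha; subst ha'
    have h1 : 2 ^ (2 * k + 1) = 2 * 2 ^ (2 * k) := by rw [pow_succ]; ring
    have h2 : (2 : ℕ) ^ (2 * k + 1) < 2 ^ (2 * k') :=
      Nat.pow_lt_pow_right one_lt_two (by omega)
    omega
  · have hlog2 : (0 : ℝ) < Real.log 2 := Real.log_pos (by norm_num)
    refine ⟨1 / (8 * Real.log 2), by positivity, ?_⟩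
    intro n S hS
    rcases Nat.eq_zero_or_pos n with rfl | hn
    · simp [Real.log_zero]
    set L := Nat.log 2 n with hL
    have hc1 := attractor_nonempty hS hn
    have hc2 := attractor_count hS
    have hnat : L + 1 ≤ 8 * S.card := nat_log_bound L S.card hc1 hc2
    have hlt : n < 2 ^ (L + 1) := Nat.lt_pow_succ_log_self (by norm_num) n
    have hlogn : Real.log n ≤ (L + 1) * Real.log 2 := by
      calc Real.log n ≤ Real.log (2 ^ (L + 1)) := by
            apply Real.log_le_log (by exact_mod_cast hn)
            exact_mod_cast hlt.le
        _ = (L + 1) * Real.log 2 := by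
            rw [Real.log_pow]; push_cast; ring
    calc 1 / (8 * Real.log 2) * Real.log n
        ≤ 1 / (8 * Real.log 2) * ((L + 1) * Real.log 2) := by
          apply mul_le_mul_of_nonneg_left hlogn (by positivity)
      _ = (L + 1) / 8 := by field_simp
      _ ≤ S.card := by
          rw [div_le_iff₀ (by norm_num : (0:ℝ) < 8)]
          have : ((L + 1 : ℕ) : ℝ) ≤ ((8 * S.card : ℕ) : ℝ) := by exact_mod_cast hnat
          push_cast at this ⊢
          linarith
end

section
/- Let w be an infinite word with appearance constant A_w < ∞, meaning every factor of w of length n appears in the prefix of length A_w·n. Then for all integers n, s ≥ 1, the prefix w[0..n-1] has a string attractor for the set of factor lengths [s..2s] of size at most 2·A_w. -/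
/-- `S` is a string attractor of `w[0..n-1]` for the set of lengths `L`: every
factor of `w[0..n-1]` whose length is a nonzero element of `L` has an occurrence
in `w[0..n-1]` crossing an index of `S`. -/
def IsAttractorForLengths {α : Type*} (w : ℕ → α) (n : ℕ) (L : Set ℕ)
    (S : Finset ℕ) : Prop :=
  (∀ s ∈ S, s < n) ∧
  ∀ ℓ ∈ L, ℓ ≠ 0 → ∀ i : ℕ, i + ℓ ≤ n →
    ∃ i' : ℕ, i' + ℓ ≤ n ∧ (∀ t < ℓ, w (i' + t) = w (i + t)) ∧
      ∃ s ∈ S, i' ≤ s ∧ s < i' + ℓ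

/-- Crossing lemma: an interval of length `ℓ ≥ s` contained in `[0, min(n, 2As))`
crosses some position `k*s - 1` with `1 ≤ k ≤ 2A`. -/
lemma cross_lemma (A s n ℓ i' : ℕ) (hs : 1 ≤ s) (hsℓ : s ≤ ℓ)
    (h1 : i' + ℓ ≤ n) (h2 : i' + ℓ ≤ 2 * A * s) :
    ∃ k, 1 ≤ k ∧ k ≤ 2 * A ∧ i' ≤ k * s - 1 ∧ k * s - 1 < i' + ℓ ∧ k * s - 1 < n := by
  have hle : i' / s * s ≤ i' := Nat.div_mul_le_self i' s
  have hlt : i' < i' / s * s + s := Nat.lt_div_mul_add hs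
  have hexp : (i' / s + 1) * s = i' / s * s + s := by ring
  set q := i' / s * s with hq
  refine ⟨i' / s + 1, le_add_self, ?_, by omega, by omega, by omega⟩
  have : (i' / s + 1) * s ≤ 2 * A * s := by omega
  exact Nat.le_of_mul_le_mul_right this hs

/-- If `w` has appearance constant `A` (every length-`m` factor of `w` appears in
the prefix of length `A·m`), then for all `n, s ≥ 1` the prefix `w[0..n-1]` has a
string attractor for lengths `[s..2s]` of size at most `2·A`. -/
theorem attractor_for_lengths_of_appearance {α : Type*} (w : ℕ → α) (A : ℕ)
    (hA : ∀ m i : ℕ, ∃ j : ℕ, j + m ≤ A * m ∧ ∀ t < m, w (j + t) = w (i + t)) :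
    ∀ n s : ℕ, 1 ≤ n → 1 ≤ s →
      ∃ S : Finset ℕ, S.card ≤ 2 * A ∧
        IsAttractorForLengths w n (Set.Icc s (2 * s)) S := by
  intro n s hn hs
  refine ⟨((Finset.Icc 1 (2 * A)).image (fun k => k * s - 1)).filter (· < n), ?_, ?_, ?_⟩
  · calc (((Finset.Icc 1 (2 * A)).image (fun k => k * s - 1)).filter (· < n)).card
        ≤ ((Finset.Icc 1 (2 * A)).image (fun k => k * s - 1)).card :=
          Finset.card_filter_le _ _
      _ ≤ (Finset.Icc 1 (2 * A)).card := Finset.card_image_le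
      _ = 2 * A := by simp
  · intro x hx
    exact (Finset.mem_filter.mp hx).2
  · intro ℓ hℓ hℓ0 i hi
    obtain ⟨hs1, hs2⟩ := Set.mem_Icc.mp hℓ
    by_cases hcase : n < 2 * A * s
    · refine ⟨i, hi, fun t _ => rfl, ?_⟩
      obtain ⟨k, hk1, hk2, hk3, hk4, hk5⟩ :=
        cross_lemma A s n ℓ i hs hs1 hi (by omega)
      exact ⟨k * s - 1, Finset.mem_filter.mpr
        ⟨Finset.mem_image.mpr ⟨k, Finset.mem_Icc.mpr ⟨hk1, hk2⟩, rfl⟩, hk5⟩, hk3, hk4⟩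
    · push_neg at hcase
      obtain ⟨j, hj1, hj2⟩ := hA ℓ i
      have hjb : j + ℓ ≤ 2 * A * s := le_trans hj1 (by nlinarith)
      have hjn : j + ℓ ≤ n := le_trans hjb hcase
      refine ⟨j, hjn, hj2, ?_⟩
      obtain ⟨k, hk1, hk2, hk3, hk4, hk5⟩ :=
        cross_lemma A s n ℓ j hs hs1 hjn hjb
      exact ⟨k * s - 1, Finset.mem_filter.mpr
        ⟨Finset.mem_image.mpr ⟨k, Finset.mem_Icc.mpr ⟨hk1, hk2⟩, rfl⟩, hk5⟩, hk3, hk4⟩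
end

section
/- Let w be an infinite word with finite appearance constant A_w. Then for every n ≥ 1, the prefix w[0..n-1] has a string attractor of size O(A_w · log n). -/
/-!
A factor of length `m`, with `2^k ≤ m < 2^(k+1)`, of the prefix of length `n` occurs inside the
prefix of length `min n (A * 2^(k+1))` (the occurrence given by the appearance bound, or the
factor itself when that one overshoots `n`), and that occurrence contains a multiple of `2^k`. So the
multiples of `2^k` below `min n (A * 2^(k+1))`, at most `2A` of them, attract all factors with
lengths in `[2^k, 2^(k+1))`; taking the union over `k ≤ log₂ n` gives an attractor of size
`2A (log₂ n + 1)`.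
-/

open Finset

def HasAppearanceBound {α : Type*} (w : ℕ → α) (A : ℕ) : Prop :=
  ∀ m i : ℕ, ∃ j : ℕ, j + m ≤ A * m ∧ ∀ t < m, w (j + t) = w (i + t)

lemma exists_dvd_mem_Ico {d : ℕ} (hd : 0 < d) (a : ℕ) : ∃ s, d ∣ s ∧ s ∈ Ico a (a + d) := by
  refine ⟨d * ((a + d - 1) / d), Dvd.intro _ rfl, ?_⟩
  have := Nat.div_add_mod (a + d - 1) d
  have := Nat.mod_lt (a + d - 1) hd
  rw [mem_Ico]
  omega

lemma card_filter_dvd_range_mul_le (d N : ℕ) : #{s ∈ range (d * N) | d ∣ s} ≤ N := by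
  have hsub : {s ∈ range (d * N) | d ∣ s} ⊆ (range N).image (d * ·) := by
    intro s hs
    obtain ⟨hs, t, rfl⟩ := mem_filter.mp hs
    have ht : t < N := Nat.lt_of_mul_lt_mul_left (mem_range.mp hs)
    exact mem_image.mpr ⟨t, mem_range.mpr ht, rfl⟩
  calc #{s ∈ range (d * N) | d ∣ s} ≤ #((range N).image (d * ·)) := card_le_card hsub
    _ ≤ N := card_image_le.trans (card_range N).le

lemma HasAppearanceBound.exists_occurrence_le_min {α : Type*} {w : ℕ → α} {A : ℕ}
    (hA : HasAppearanceBound w A) {i m n : ℕ} (h : i + m ≤ n) :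
    ∃ a, a + m ≤ min n (A * m) ∧ ∀ t < m, w (a + t) = w (i + t) := by
  obtain ⟨j, hj, hocc⟩ := hA m i
  by_cases hjn : j + m ≤ n
  · exact ⟨j, le_min hjn hj, hocc⟩
  · exact ⟨i, le_min h (by omega), fun _ _ => rfl⟩

def attractorLevel (n A k : ℕ) : Finset ℕ :=
  {s ∈ range (min n (A * 2 ^ (k + 1))) | 2 ^ k ∣ s}

def logAttractor (n A : ℕ) : Finset ℕ :=
  (range (Nat.log 2 n + 1)).biUnion (attractorLevel n A)

lemma card_attractorLevel_le (n A k : ℕ) : #(attractorLevel n A k) ≤ 2 * A := by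
  have hbound : min n (A * 2 ^ (k + 1)) ≤ 2 ^ k * (2 * A) :=
    (min_le_right _ _).trans_eq (by ring)
  exact (card_le_card (filter_subset_filter _ (range_subset_range.mpr hbound))).trans
    (card_filter_dvd_range_mul_le _ _)

lemma card_logAttractor_le (n A : ℕ) : #(logAttractor n A) ≤ 2 * A * (Nat.log 2 n + 1) := by
  calc #(logAttractor n A) ≤ ∑ k ∈ range (Nat.log 2 n + 1), #(attractorLevel n A k) :=
        card_biUnion_le
    _ ≤ ∑ _k ∈ range (Nat.log 2 n + 1), 2 * A := sum_le_sum fun k _ => card_attractorLevel_le n A k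
    _ = 2 * A * (Nat.log 2 n + 1) := by rw [sum_const, card_range, smul_eq_mul, mul_comm]

lemma exists_mem_attractorLevel {n A k a : ℕ} (h : a + 2 ^ k ≤ min n (A * 2 ^ (k + 1))) :
    ∃ s ∈ attractorLevel n A k, a ≤ s ∧ s < a + 2 ^ k := by
  obtain ⟨s, hdvd, hs⟩ := exists_dvd_mem_Ico (Nat.two_pow_pos k) a
  rw [mem_Ico] at hs
  exact ⟨s, mem_filter.mpr ⟨mem_range.mpr (by omega), hdvd⟩, hs⟩

lemma HasAppearanceBound.isAttractor_logAttractor {α : Type*} {w : ℕ → α} {A : ℕ}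
    (hA : HasAppearanceBound w A) (n : ℕ) : IsAttractor w n (logAttractor n A) := by
  refine ⟨fun s hs => ?_, fun i j hij hjn => ?_⟩
  · obtain ⟨k, -, hs⟩ := mem_biUnion.mp hs
    exact (mem_range.mp (mem_filter.mp hs).1).trans_le (min_le_left _ _)
  set m := j - i + 1
  set k := Nat.log 2 m
  have hkm : 2 ^ k ≤ m := Nat.pow_log_le_self 2 (by omega)
  have hmk : m < 2 ^ (k + 1) := Nat.lt_pow_succ_log_self Nat.one_lt_two m
  obtain ⟨a, ha, hocc⟩ := hA.exists_occurrence_le_min (show i + m ≤ n by omega)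
  have hAm : A * m ≤ A * 2 ^ (k + 1) := Nat.mul_le_mul_left A hmk.le
  obtain ⟨s, hs, has⟩ :=
    exists_mem_attractorLevel (show a + 2 ^ k ≤ min n (A * 2 ^ (k + 1)) by omega)
  have hkn : k ≤ Nat.log 2 n := Nat.log_mono_right (by omega)
  exact ⟨a, a + (j - i), by omega, by omega, by omega, fun t ht => hocc t (by omega),
    s, mem_biUnion.mpr ⟨k, mem_range.mpr (by omega), hs⟩, has.1, by omega⟩

/-- If `w` has finite appearance constant `A`, then the prefix `w[0..n-1]` has a
string attractor of size `O(A · log n)`. -/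
theorem attractor_log_of_appearance :
    ∃ c : ℕ, ∀ (α : Type) (w : ℕ → α) (A : ℕ),
      (∀ m i : ℕ, ∃ j : ℕ, j + m ≤ A * m ∧ ∀ t < m, w (j + t) = w (i + t)) →
      ∀ n : ℕ, 1 ≤ n →
        ∃ S : Finset ℕ, IsAttractor w n S ∧
          S.card ≤ c * A * (Nat.log 2 n + 1) :=
  ⟨2, fun _ _ _ hA n _ =>
    ⟨logAttractor n _, HasAppearanceBound.isAttractor_logAttractor hA n, card_logAttractor_le n _⟩⟩
end

section
/- For the period-doubling sequence, among all string attractors of minimum cardinality (which is 2 for prefixes of length ≥ 2), the minimum span of the length-n prefix equals 0 for n = 1, 1 for 2 ≤ n < 5 (as stated, for 2 < n < 5 together with small cases), and 2^i for 3·2^i ≤ n < 3·2^{i+1} with i ≥ 1, where the span of a string attractor {i_1 < ... < i_k} is i_k - i_1. -/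
namespace PDaux

def nu2F : ℕ → ℕ → ℕ
  | 0, _ => 0
  | f + 1, m => if m % 2 = 0 ∧ m ≠ 0 then nu2F f (m / 2) + 1 else 0

def nu2 (m : ℕ) : ℕ := nu2F m m

def pdf (m : ℕ) : ℕ := (nu2 (m + 1) + 1) % 2

lemma nu2F_congr : ∀ f g m, m ≤ f → m ≤ g → nu2F f m = nu2F g m := by
  intro f
  induction f with
  | zero =>
    intro g m hf hg
    interval_cases m
    cases g with
    | zero => rfl
    | succ g => simp [nu2F]
  | succ f ih =>
    intro g m hf hg
    cases g with
    | zero =>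
      interval_cases m
      simp [nu2F]
    | succ g =>
      simp only [nu2F]
      by_cases h : m % 2 = 0 ∧ m ≠ 0
      · simp only [if_pos h]
        have hm : 1 ≤ m := Nat.one_le_iff_ne_zero.mpr h.2
        have : m / 2 ≤ f := by omega
        have : m / 2 ≤ g := by omega
        rw [ih g (m/2) (by omega) (by omega)]
      · simp [if_neg h]

lemma nu2_odd {m : ℕ} (h : m % 2 = 1) : nu2 m = 0 := by
  cases m with
  | zero => simp at h
  | succ k =>
    show nu2F (k+1) (k+1) = 0
    simp only [nu2F]
    rw [if_neg (by omega)]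

lemma nu2_two_mul {m : ℕ} (h : m ≠ 0) : nu2 (2 * m) = nu2 m + 1 := by
  have h1 : 1 ≤ m := Nat.one_le_iff_ne_zero.mpr h
  have : nu2 (2 * m) = nu2F (2 * m) (2 * m) := rfl
  obtain ⟨k, hk⟩ : ∃ k, 2 * m = k + 1 := ⟨2 * m - 1, by omega⟩
  rw [nu2, hk]
  simp only [nu2F]
  rw [if_pos (by omega)]
  have h2 : (k + 1) / 2 = m := by omega
  rw [h2]
  rw [nu2F_congr k m m (by omega) le_rfl]
  rfl

lemma nu2_pow (k : ℕ) : nu2 (2 ^ k) = k := by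
  induction k with
  | zero => simp [nu2, nu2F]
  | succ k ih =>
    rw [pow_succ, mul_comm, nu2_two_mul (by positivity), ih]

lemma nu2_two_mod_four {x : ℕ} (h : x % 4 = 2) : nu2 x = 1 := by
  have hx : x = 2 * (x / 2) := by omega
  rw [hx, nu2_two_mul (by omega), nu2_odd (by omega)]

lemma nu2_four_mod_eight {x : ℕ} (h : x % 8 = 4) : nu2 x = 2 := by
  have hx : x = 2 * (x / 2) := by omega
  rw [hx, nu2_two_mul (by omega), nu2_two_mod_four (by omega)]

lemma pdf_le_one (m : ℕ) : pdf m ≤ 1 := by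
  have := Nat.mod_lt (nu2 (m + 1) + 1) (show 0 < 2 by norm_num)
  simp only [pdf]; omega

lemma pdf_two_mul (q : ℕ) : pdf (2 * q) = 1 := by
  simp only [pdf]
  rw [nu2_odd (by omega)]

lemma pdf_even {m : ℕ} (h : m % 2 = 0) : pdf m = 1 := by
  have : m = 2 * (m / 2) := by omega
  rw [this, pdf_two_mul]

lemma pdf_two_mul_add_one (q : ℕ) : pdf (2 * q + 1) = 1 - pdf q := by
  simp only [pdf]
  have : 2 * q + 1 + 1 = 2 * (q + 1) := by ring
  rw [this, nu2_two_mul (by omega)]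
  omega

lemma pdf_odd {m : ℕ} (h : m % 2 = 1) : pdf m = 1 - pdf (m / 2) := by
  have : m = 2 * (m / 2) + 1 := by omega
  conv_lhs => rw [this]
  rw [pdf_two_mul_add_one]

lemma pdf_eq_zero_odd {m : ℕ} (h : pdf m = 0) : m % 2 = 1 := by
  by_contra hc
  rw [pdf_even (by omega)] at h
  exact absurd h one_ne_zero

lemma pdf_flip_inj {x y : ℕ} (hx : x ≤ 1) (hy : y ≤ 1) (h : 1 - x = 1 - y) : x = y := by
  omega

lemma pdf_one_iff (m : ℕ) : pdf m = 1 ↔ nu2 (m + 1) % 2 = 0 := by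
  simp only [pdf]; omega

lemma pdf_zero_iff (m : ℕ) : pdf m = 0 ↔ nu2 (m + 1) % 2 = 1 := by
  simp only [pdf]; omega

lemma pdStep_length (x : ℕ) : (pdStep x).length = 2 := by
  match x with
  | 0 => rfl
  | 1 => rfl
  | (n+2) => rfl

lemma pdIter_length (k : ℕ) : (pdIter k).length = 2 ^ k := by
  induction k with
  | zero => rfl
  | succ k ih =>
    show ((pdIter k).flatMap pdStep).length = 2 ^ (k + 1)
    have key : ∀ l : List ℕ, (l.flatMap pdStep).length = 2 * l.length := by
      intro l
      induction l with
      | nil => rfl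
      | cons a t iht =>
        rw [List.flatMap_cons, List.length_append, iht, pdStep_length]
        simp [List.length_cons]; ring
    rw [key, ih]; ring


lemma flatMap_getD (l : List ℕ) : ∀ q r, r < 2 → q < l.length →
    (l.flatMap pdStep).getD (2 * q + r) 0 = (pdStep (l.getD q 0)).getD r 0 := by
  induction l with
  | nil => intro q r _ h; simp at h
  | cons a t ih =>
    intro q r hr hq
    rw [List.flatMap_cons]
    cases q with
    | zero =>
      simp only [Nat.mul_zero, Nat.zero_add]
      rw [List.getD_append _ _ _ _ (by rw [pdStep_length]; omega)]
      rfl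
    | succ q =>
      have hlen : (pdStep a).length = 2 := pdStep_length a
      rw [List.getD_append_right _ _ _ _ (by omega)]
      have : 2 * (q + 1) + r - (pdStep a).length = 2 * q + r := by omega
      rw [this, ih q r hr (by simpa using hq)]
      rfl

lemma pdIter_getD : ∀ k m, m < 2 ^ k → (pdIter k).getD m 0 = pdf m := by
  intro k
  induction k with
  | zero =>
    intro m hm
    interval_cases m
    simp [pdIter, pdf, nu2, nu2F]
  | succ k ih =>
    intro m hm
    have hdecomp : m = 2 * (m / 2) + m % 2 := by omega
    have hq : m / 2 < 2 ^ k := by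
      have : 2 ^ (k+1) = 2 * 2 ^ k := by ring
      omega
    have hlen : m / 2 < (pdIter k).length := by rw [pdIter_length]; exact hq
    show ((pdIter k).flatMap pdStep).getD m 0 = pdf m
    conv_lhs => rw [hdecomp]
    rw [flatMap_getD _ _ _ (by omega) hlen, ih _ hq]
    have hple := pdf_le_one (m / 2)
    rcases (by omega : m % 2 = 0 ∨ m % 2 = 1) with h2 | h2 <;>
    rcases (by omega : pdf (m / 2) = 0 ∨ pdf (m / 2) = 1) with hp | hp <;>
      rw [hp] <;> rw [h2]
    · show (1 : ℕ) = pdf m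
      rw [pdf_even (by omega)]
    · show (1 : ℕ) = pdf m
      rw [pdf_even (by omega)]
    · show (1 : ℕ) = pdf m
      rw [pdf_odd (by omega), hp]
    · show (0 : ℕ) = pdf m
      rw [pdf_odd (by omega), hp]

lemma pd_eq_pdf : pd = pdf := by
  funext m
  show (pdIter (m + 1)).getD m 0 = pdf m
  apply pdIter_getD
  calc m < 2 ^ m := Nat.lt_two_pow_self (n := m)
  _ ≤ 2 ^ (m + 1) := Nat.pow_le_pow_right (by norm_num) (by omega)

end PDaux


namespace PDaux

def Inv4 (n a b : ℕ) : Prop :=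
  a < b ∧ b + 2 ≤ n ∧ pdf a ≠ pdf b ∧
  (∀ i < n, ∀ j < n, i < j → j + 2 ≤ n →
    ∃ p < n, p + (j - i) + 2 ≤ n ∧ (∀ t ≤ j - i, pdf (p + t) = pdf (i + t)) ∧
      ((p ≤ a ∧ a ≤ p + (j - i)) ∨ (p ≤ b ∧ b ≤ p + (j - i)))) ∧
  (∀ i < n, i + 2 ≤ n →
    ∃ p < n, p + (n - 1 - i) + 1 ≤ n ∧ (∀ t ≤ n - 1 - i, pdf (p + t) = pdf (i + t)) ∧
      ((p ≤ a ∧ a ≤ p + (n - 1 - i) ∧ (a < p + (n - 1 - i) ∨ p + (n - 1 - i) + 2 ≤ n)) ∨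
       (p ≤ b ∧ b ≤ p + (n - 1 - i) ∧ (b < p + (n - 1 - i) ∨ p + (n - 1 - i) + 2 ≤ n))))

set_option synthInstance.maxSize 1000 in
set_option synthInstance.maxHeartbeats 1000000 in
instance (n a b : ℕ) : Decidable (Inv4 n a b) := by
  unfold Inv4; infer_instance

lemma transfer {q i₀ D : ℕ} (hC : ∀ c ≤ D, pdf (q + c) = pdf (i₀ + c)) :
    ∀ u ≤ 2 * D + 2, pdf (2 * q + u) = pdf (2 * i₀ + u) := by
  intro u hu
  rcases (by omega : u % 2 = 0 ∨ u % 2 = 1) with h2 | h2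
  · have e1 : 2 * q + u = 2 * (q + u / 2) := by omega
    have e2 : 2 * i₀ + u = 2 * (i₀ + u / 2) := by omega
    rw [e1, e2, pdf_two_mul, pdf_two_mul]
  · have hc : u / 2 ≤ D := by omega
    have e1 : 2 * q + u = 2 * (q + u / 2) + 1 := by omega
    have e2 : 2 * i₀ + u = 2 * (i₀ + u / 2) + 1 := by omega
    rw [e1, e2, pdf_two_mul_add_one, pdf_two_mul_add_one, hC _ hc]

lemma pick {a b : ℕ} (hab : pdf a ≠ pdf b) (c : ℕ) :
    ∃ s, (s = a ∨ s = b) ∧ pdf s = pdf c := by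
  have h1 := pdf_le_one a
  have h2 := pdf_le_one b
  have h3 := pdf_le_one c
  by_cases h : pdf a = pdf c
  · exact ⟨a, Or.inl rfl, h⟩
  · exact ⟨b, Or.inr rfl, by omega⟩

lemma block_content {s i₀ : ℕ} (hs : pdf s = pdf i₀) :
    ∀ u ≤ 2, pdf (2 * s + u) = pdf (2 * i₀ + u) := by
  intro u hu
  interval_cases u
  · rw [Nat.add_zero, Nat.add_zero, pdf_two_mul, pdf_two_mul]
  · rw [pdf_two_mul_add_one, pdf_two_mul_add_one, hs]
  · have e1 : 2 * s + 2 = 2 * (s + 1) := by ring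
    have e2 : 2 * i₀ + 2 = 2 * (i₀ + 1) := by ring
    rw [e1, e2, pdf_two_mul, pdf_two_mul]

theorem inv4_double {m a b n : ℕ} (hm : 6 ≤ m) (hn : n = 2 * m ∨ n = 2 * m + 1)
    (h : Inv4 m a b) : Inv4 n (2 * a + 1) (2 * b + 1) := by
  obtain ⟨hab, hb2, hlet, H1, H2⟩ := h
  have hnl : 2 * m ≤ n := by rcases hn with h | h <;> omega
  have hnu : n ≤ 2 * m + 1 := by rcases hn with h | h <;> omega
  refine ⟨by omega, by omega, ?_, ?_, ?_⟩
  · rw [pdf_two_mul_add_one, pdf_two_mul_add_one]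
    have := pdf_le_one a; have := pdf_le_one b
    omega
  · -- Part1
    intro i _ j _ hij hj2
    have hr : i % 2 < 2 := Nat.mod_lt _ (by norm_num)
    set r := i % 2 with hrdef
    set i₀ := i / 2 with hi₀def
    have hi_eq : i = 2 * i₀ + r := by omega
    rcases (by omega : j % 2 = 1 ∨ j % 2 = 0) with hjp | hjp
    · -- j odd
      set j₀ := j / 2 with hj₀def
      have hj_eq : j = 2 * j₀ + 1 := by omega
      by_cases hcase : i₀ = j₀
      · -- tiny block window: i = 2 i₀, j = 2 i₀ + 1
        have hieq2 : i = 2 * i₀ ∧ r = 0 := by omega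
        obtain ⟨s, hs, hsv⟩ := pick hlet i₀
        have hsle : s + 2 ≤ m := by rcases hs with h | h <;> omega
        refine ⟨2 * s, by omega, by omega, ?_, ?_⟩
        · intro t ht
          have hd : j - i = 1 := by omega
          rw [hd] at ht
          have e2 : i + t = 2 * i₀ + t := by omega
          rw [e2]
          exact block_content hsv t (by omega)
        · rcases hs with h | h
          · exact Or.inl (by omega)
          · exact Or.inr (by omega)
      · -- i₀ < j₀
        have hij₀ : i₀ < j₀ := by omega
        by_cases hjm : j₀ + 2 ≤ m
        · -- use H1
          obtain ⟨q, hqn, hqb, hC, htouch⟩ :=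
            H1 i₀ (by omega) j₀ (by omega) hij₀ hjm
          set D := j₀ - i₀ with hDdef
          have hd : j - i = 2 * D + 1 - r := by omega
          refine ⟨2 * q + r, by omega, by omega, ?_, ?_⟩
          · intro t ht
            have e1 : 2 * q + r + t = 2 * q + (r + t) := by omega
            have e2 : i + t = 2 * i₀ + (r + t) := by omega
            rw [e1, e2]
            exact transfer (D := D) (fun c hc => hC c (by omega)) (r + t) (by omega)
          · rcases htouch with h | h
            · exact Or.inl (by omega)
            · exact Or.inr (by omega)
        · -- j₀ = m - 1, forces n = 2m+1 ; use H2
          have hj₀m : j₀ = m - 1 := by omega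
          have hn2 : n = 2 * m + 1 := by omega
          obtain ⟨q, hqn, hqb, hC, htouch⟩ := H2 i₀ (by omega) (by omega)
          set D := m - 1 - i₀ with hDdef
          have hDj : D = j₀ - i₀ := by omega
          have hd : j - i = 2 * D + 1 - r := by omega
          refine ⟨2 * q + r, by omega, by omega, ?_, ?_⟩
          · intro t ht
            have e1 : 2 * q + r + t = 2 * q + (r + t) := by omega
            have e2 : i + t = 2 * i₀ + (r + t) := by omega
            rw [e1, e2]
            exact transfer (D := D) (fun c hc => hC c (by omega)) (r + t) (by omega)
          · rcases htouch with h | h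
            · exact Or.inl (by omega)
            · exact Or.inr (by omega)
    · -- j even
      set j₀ := j / 2 with hj₀def
      have hj_eq : j = 2 * j₀ := by omega
      have hij₀ : i₀ < j₀ := by omega
      by_cases hcase : i₀ = j₀ - 1
      · -- block window pieces: i ∈ {2 j₀ - 2, 2 j₀ - 1}
        obtain ⟨s, hs, hsv⟩ := pick hlet i₀
        have hsle : s + 2 ≤ m := by rcases hs with h | h <;> omega
        refine ⟨2 * s + r, by omega, by omega, ?_, ?_⟩
        · intro t ht
          have e1 : 2 * s + r + t = 2 * s + (r + t) := by omega
          have e2 : i + t = 2 * i₀ + (r + t) := by omega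
          rw [e1, e2]
          exact block_content hsv (r + t) (by omega)
        · rcases hs with h | h
          · exact Or.inl (by omega)
          · exact Or.inr (by omega)
      · -- i₀ < j₀ - 1 : use H1 at (i₀, j₀ - 1)
        have hj₀m : j₀ ≤ m - 1 := by omega
        obtain ⟨q, hqn, hqb, hC, htouch⟩ :=
          H1 i₀ (by omega) (j₀ - 1) (by omega) (by omega) (by omega)
        set D := j₀ - 1 - i₀ with hDdef
        have hd : j - i = 2 * D + 2 - r := by omega
        refine ⟨2 * q + r, by omega, by omega, ?_, ?_⟩
        · intro t ht
          have e1 : 2 * q + r + t = 2 * q + (r + t) := by omega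
          have e2 : i + t = 2 * i₀ + (r + t) := by omega
          rw [e1, e2]
          exact transfer (D := D) (fun c hc => hC c (by omega)) (r + t) (by omega)
        · rcases htouch with h | h
          · exact Or.inl (by omega)
          · exact Or.inr (by omega)
  · -- Part2
    intro i hin hi2
    have hr : i % 2 < 2 := Nat.mod_lt _ (by norm_num)
    set r := i % 2 with hrdef
    set i₀ := i / 2 with hi₀def
    have hi_eq : i = 2 * i₀ + r := by omega
    rcases hn with hn2 | hn2
    · -- n = 2m, last index 2m-1 odd
      by_cases hcase : i₀ = m - 1
      · -- i = 2m - 2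
        have hieq2 : i = 2 * m - 2 ∧ r = 0 := by omega
        obtain ⟨s, hs, hsv⟩ := pick hlet (m - 1)
        have hsle : s + 2 ≤ m := by rcases hs with h | h <;> omega
        have hd : n - 1 - i = 1 := by omega
        rw [hd]
        refine ⟨2 * s, by omega, by omega, ?_, ?_⟩
        · intro t ht
          have e2 : i + t = 2 * (m - 1) + t := by omega
          rw [e2]
          exact block_content hsv t (by omega)
        · rcases hs with h | h
          · exact Or.inl (by omega)
          · exact Or.inr (by omega)
      · -- i₀ < m - 1 : use H2
        have hii : i₀ < m - 1 := by omega
        obtain ⟨q, hqn, hqb, hC, htouch⟩ := H2 i₀ (by omega) (by omega)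
        set D := m - 1 - i₀ with hDdef
        have hd : n - 1 - i = 2 * D + 1 - r := by omega
        rw [hd]
        refine ⟨2 * q + r, by omega, by omega, ?_, ?_⟩
        · intro t ht
          have e1 : 2 * q + r + t = 2 * q + (r + t) := by omega
          have e2 : i + t = 2 * i₀ + (r + t) := by omega
          rw [e1, e2]
          exact transfer (D := D) (fun c hc => hC c (by omega)) (r + t) (by omega)
        · rcases htouch with h | h
          · exact Or.inl (by omega)
          · exact Or.inr (by omega)
    · -- n = 2m+1, last index 2m even
      by_cases hcase : i₀ = m - 1
      · -- i ∈ {2m-2, 2m-1}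
        obtain ⟨s, hs, hsv⟩ := pick hlet (m - 1)
        have hsle : s + 2 ≤ m := by rcases hs with h | h <;> omega
        have hd : n - 1 - i = 2 - r := by omega
        rw [hd]
        refine ⟨2 * s + r, by omega, by omega, ?_, ?_⟩
        · intro t ht
          have e1 : 2 * s + r + t = 2 * s + (r + t) := by omega
          have e2 : i + t = 2 * (m - 1) + (r + t) := by omega
          rw [e1, e2]
          exact block_content hsv (r + t) (by omega)
        · rcases hs with h | h
          · exact Or.inl (by omega)
          · exact Or.inr (by omega)
      · -- i₀ < m - 1 : use H2 for (i₀, m-1), image plus trailing 1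
        have hii : i₀ < m - 1 := by omega
        obtain ⟨q, hqn, hqb, hC, htouch⟩ := H2 i₀ (by omega) (by omega)
        set D := m - 1 - i₀ with hDdef
        have hd : n - 1 - i = 2 * D + 2 - r := by omega
        rw [hd]
        refine ⟨2 * q + r, by omega, by omega, ?_, ?_⟩
        · intro t ht
          have e1 : 2 * q + r + t = 2 * q + (r + t) := by omega
          have e2 : i + t = 2 * i₀ + (r + t) := by omega
          rw [e1, e2]
          exact transfer (D := D) (fun c hc => hC c (by omega)) (r + t) (by omega)
        · rcases htouch with h | h
          · exact Or.inl (by omega)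
          · exact Or.inr (by omega)

end PDaux


namespace PDaux

lemma inv4_base1 : Inv4 6 1 3 ∧ Inv4 7 1 3 := by constructor <;> decide

lemma inv4_base2 : Inv4 8 3 5 ∧ Inv4 9 3 5 ∧ Inv4 10 3 5 ∧ Inv4 11 3 5 := by
  refine ⟨?_, ?_, ?_, ?_⟩ <;> decide

theorem fam : ∀ n i, 1 ≤ i →
    ((3 * 2 ^ i ≤ n → n < 2 ^ (i + 2) → Inv4 n (2 ^ i - 1) (2 ^ (i + 1) - 1)) ∧
     (2 ^ (i + 2) ≤ n → n < 3 * 2 ^ (i + 1) → Inv4 n (2 ^ (i + 1) - 1) (3 * 2 ^ i - 1))) := by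
  intro n
  induction n using Nat.strong_induction_on with
  | _ n ih =>
    intro i hi
    by_cases hn12 : n < 12
    · -- base region: force i = 1
      constructor
      · intro h1 h2
        have hi1 : i = 1 := by
          by_contra hne
          have h2i : 2 ≤ i := by omega
          have : (4 : ℕ) ≤ 2 ^ i := by
            calc (4 : ℕ) = 2 ^ 2 := rfl
            _ ≤ 2 ^ i := Nat.pow_le_pow_right (by norm_num) h2i
          omega
        subst hi1
        norm_num at h1 h2 ⊢
        interval_cases n
        · exact inv4_base1.1
        · exact inv4_base1.2
      · intro h1 h2
        have hi1 : i = 1 := by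
          by_contra hne
          have h2i : 2 ≤ i := by omega
          have : (16 : ℕ) ≤ 2 ^ (i + 2) := by
            calc (16 : ℕ) = 2 ^ 4 := rfl
            _ ≤ 2 ^ (i + 2) := Nat.pow_le_pow_right (by norm_num) (by omega)
          omega
        subst hi1
        norm_num at h1 h2 ⊢
        interval_cases n
        · exact inv4_base2.1
        · exact inv4_base2.2.1
        · exact inv4_base2.2.2.1
        · exact inv4_base2.2.2.2
    · -- n ≥ 12
      push_neg at hn12
      have hmlt : n / 2 < n := by omega
      have hneq : n = 2 * (n / 2) ∨ n = 2 * (n / 2) + 1 := by omega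
      constructor
      · intro h1 h2
        -- i ≥ 2 since n ≥ 12
        have h2i : 2 ≤ i := by
          by_contra hne
          have : i = 1 := by omega
          subst this
          norm_num at h2
          omega
        obtain ⟨k, rfl⟩ : ∃ k, i = k + 1 := ⟨i - 1, by omega⟩
        have hk1 : 1 ≤ k := by omega
        have pA : (2:ℕ)^(k+1+2) = 2*2^(k+2) := by ring
        have pB : (2:ℕ)^(k+2) = 2*2^(k+1) := by ring
        have pC : (2:ℕ)^(k+1) = 2*2^k := by ring
        have pD : (2:ℕ)^(k+1+1) = 2*2^(k+1) := by ring
        have hpow : 2 * 2 ^ k = 2 ^ (k + 1) := by ring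
        have hpow2 : 2 * 2 ^ (k + 1) = 2 ^ (k + 2) := by ring
        have hpos : 1 ≤ 2 ^ k := Nat.one_le_two_pow
        have hm1 : 3 * 2 ^ k ≤ n / 2 := by omega
        have hm2 : n / 2 < 2 ^ (k + 2) := by omega
        have hIH := (ih (n / 2) hmlt k hk1).1 hm1 hm2
        have hm6 : 6 ≤ n / 2 := by
          have : (2:ℕ) ≤ 2 ^ k := by
            calc (2:ℕ) = 2^1 := rfl
            _ ≤ 2 ^ k := Nat.pow_le_pow_right (by norm_num) hk1
          omega
        have := inv4_double hm6 hneq hIH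
        have e1 : 2 * (2 ^ k - 1) + 1 = 2 ^ (k + 1) - 1 := by omega
        have e2 : 2 * (2 ^ (k + 1) - 1) + 1 = 2 ^ (k + 1 + 1) - 1 := by
          have : 2 * 2 ^ (k+1) = 2 ^ (k+2) := by ring
          omega
        rw [e1, e2] at this
        exact this
      · intro h1 h2
        have h2i : 2 ≤ i := by
          by_contra hne
          have : i = 1 := by omega
          subst this
          norm_num at h1 h2
          omega
        obtain ⟨k, rfl⟩ : ∃ k, i = k + 1 := ⟨i - 1, by omega⟩
        have hk1 : 1 ≤ k := by omega
        have pA : (2:ℕ)^(k+1+2) = 2*2^(k+2) := by ring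
        have pB : (2:ℕ)^(k+2) = 2*2^(k+1) := by ring
        have pC : (2:ℕ)^(k+1) = 2*2^k := by ring
        have pD : (2:ℕ)^(k+1+1) = 2*2^(k+1) := by ring
        have hpow : 2 * 2 ^ (k + 2) = 2 ^ (k + 3) := by ring
        have hpow2 : 2 * (3 * 2 ^ k) = 3 * 2 ^ (k + 1) := by ring
        have hpos : 1 ≤ 2 ^ k := Nat.one_le_two_pow
        have hm1 : 2 ^ (k + 2) ≤ n / 2 := by omega
        have hm2 : n / 2 < 3 * 2 ^ (k + 1) := by omega
        have hIH := (ih (n / 2) hmlt k hk1).2 hm1 hm2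
        have hm6 : 6 ≤ n / 2 := by
          have : (8:ℕ) ≤ 2 ^ (k+2) := by
            calc (8:ℕ) = 2^3 := rfl
            _ ≤ 2 ^ (k+2) := Nat.pow_le_pow_right (by norm_num) (by omega)
          omega
        have := inv4_double hm6 hneq hIH
        have e1 : 2 * (2 ^ (k + 1) - 1) + 1 = 2 ^ (k + 1 + 1) - 1 := by
          have : 2 * 2 ^ (k+1) = 2 ^ (k+2) := by ring
          omega
        have e2 : 2 * (3 * 2 ^ k - 1) + 1 = 3 * 2 ^ (k + 1) - 1 := by omega
        rw [e1, e2] at this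
        exact this

end PDaux


namespace PDaux

def AttP (n a b : ℕ) : Prop :=
  ∀ i < n, ∀ j < n, i ≤ j →
    ∃ p < n, p + (j - i) < n ∧ (∀ t ≤ j - i, pdf (p + t) = pdf (i + t)) ∧
      ((p ≤ a ∧ a ≤ p + (j - i)) ∨ (p ≤ b ∧ b ≤ p + (j - i)))

set_option synthInstance.maxSize 1000 in
set_option synthInstance.maxHeartbeats 1000000 in
instance (n a b : ℕ) : Decidable (AttP n a b) := by
  unfold AttP; infer_instance

lemma attP_isAttractor {n a b : ℕ} (ha : a < n) (hb : b < n) (h : AttP n a b) :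
    IsAttractor pdf n ({a, b} : Finset ℕ) := by
  constructor
  · intro s hs
    simp only [Finset.mem_insert, Finset.mem_singleton] at hs
    rcases hs with h | h <;> omega
  · intro i j hij hj
    obtain ⟨p, hpn, hpb, hc, ht⟩ := h i (by omega) j hj hij
    refine ⟨p, p + (j - i), by omega, hpb, by omega, ?_, ?_⟩
    · intro t htt; exact hc t htt
    · rcases ht with h | h
      · exact ⟨a, by simp, by omega, by omega⟩
      · exact ⟨b, by simp, by omega, by omega⟩

lemma inv4_attP {n a b : ℕ} (h : Inv4 n a b) : AttP n a b := by
  obtain ⟨hab, hb2, hlet, H1, H2⟩ := h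
  intro i hi j hj hij
  rcases Nat.lt_or_ge i j with hlt | hge
  · rcases (by omega : j + 2 ≤ n ∨ j = n - 1) with hcase | hcase
    · obtain ⟨p, hpn, hpb, hc, ht⟩ := H1 i hi j hj hlt hcase
      exact ⟨p, hpn, by omega, hc, by rcases ht with h | h; exact Or.inl (by omega); exact Or.inr (by omega)⟩
    · obtain ⟨p, hpn, hpb, hc, ht⟩ := H2 i hi (by omega)
      subst hcase
      refine ⟨p, hpn, by omega, hc, ?_⟩
      rcases ht with h | h
      · exact Or.inl (by omega)
      · exact Or.inr (by omega)
  · have hieq : i = j := by omega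
    subst hieq
    obtain ⟨s, hs, hsv⟩ := pick hlet i
    have hsn : s < n := by rcases hs with h | h <;> omega
    refine ⟨s, hsn, by omega, ?_, ?_⟩
    · intro t ht
      have : t = 0 := by omega
      subst this
      simpa using hsv
    · rcases hs with h | h
      · exact Or.inl (by omega)
      · exact Or.inr (by omega)

lemma attP_small :
    AttP 1 0 0 ∧ AttP 2 0 1 ∧ AttP 3 0 1 ∧ AttP 4 1 2 ∧ AttP 5 1 2 := by
  refine ⟨?_, ?_, ?_, ?_, ?_⟩ <;> decide

end PDaux


namespace PDaux

def Att2 (n a b : ℕ) : Prop :=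
  ∀ i j : ℕ, i < j → j < n →
    ∃ p, p + (j - i) < n ∧ (∀ t ≤ j - i, pdf (p + t) = pdf (i + t)) ∧
      ((p ≤ a ∧ a ≤ p + (j - i)) ∨ (p ≤ b ∧ b ≤ p + (j - i)))

lemma att2_comm {n a b : ℕ} (h : Att2 n a b) : Att2 n b a := by
  intro i j hij hj
  obtain ⟨p, h1, h2, h3⟩ := h i j hij hj
  exact ⟨p, h1, h2, h3.symm⟩

lemma att2_half {n a b : ℕ} (h : Att2 n a b) : Att2 (n / 2) (a / 2) (b / 2) := by
  intro i₀ j₀ hij hj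
  have hj2 : 2 * j₀ + 1 < n := by omega
  obtain ⟨p, hpb, hc, ht⟩ := h (2 * i₀) (2 * j₀ + 1) (by omega) hj2
  set d := j₀ - i₀ with hd
  have hD : 2 * j₀ + 1 - 2 * i₀ = 2 * d + 1 := by omega
  rw [hD] at hpb hc ht
  -- find a position with letter 1 inside the source window
  have hone : ∃ u ≤ 1, pdf (i₀ + u) = 1 := by
    by_cases h1 : pdf i₀ = 1
    · exact ⟨0, by omega, by simpa using h1⟩
    · have h0 : pdf i₀ = 0 := by have := pdf_le_one i₀; omega
      have hodd := pdf_eq_zero_odd h0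
      exact ⟨1, le_rfl, pdf_even (by omega)⟩
  obtain ⟨u, hu1, hu⟩ := hone
  have hzero : pdf (p + (2 * u + 1)) = 0 := by
    rw [hc (2 * u + 1) (by omega)]
    have e : 2 * i₀ + (2 * u + 1) = 2 * (i₀ + u) + 1 := by ring
    rw [e, pdf_two_mul_add_one, hu]
  have hpodd : (p + (2 * u + 1)) % 2 = 1 := pdf_eq_zero_odd hzero
  have hpeven : p % 2 = 0 := by omega
  set q := p / 2 with hq
  have hpq : p = 2 * q := by omega
  refine ⟨q, by omega, ?_, ?_⟩
  · intro c hcle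
    have h1 := hc (2 * c + 1) (by omega)
    have e1 : p + (2 * c + 1) = 2 * (q + c) + 1 := by omega
    have e2 : 2 * i₀ + (2 * c + 1) = 2 * (i₀ + c) + 1 := by ring
    rw [e1, e2, pdf_two_mul_add_one, pdf_two_mul_add_one] at h1
    have := pdf_le_one (q + c); have := pdf_le_one (i₀ + c)
    omega
  · rcases ht with h | h
    · left
      constructor
      · calc q = (2 * q) / 2 := by omega
          _ ≤ a / 2 := Nat.div_le_div_right (by omega)
      · calc a / 2 ≤ (2 * (q + d) + 1) / 2 := Nat.div_le_div_right (by omega)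
          _ = q + d := by omega
    · right
      constructor
      · calc q = (2 * q) / 2 := by omega
          _ ≤ b / 2 := Nat.div_le_div_right (by omega)
      · calc b / 2 ≤ (2 * (q + d) + 1) / 2 := Nat.div_le_div_right (by omega)
          _ = q + d := by omega

def ExW (n a b : ℕ) : Prop :=
  ∃ i < n, ∃ j < n, i < j ∧ ∀ p < n,
    (p + (j - i) < n ∧ ∀ t ≤ j - i, pdf (p + t) = pdf (i + t)) →
      ¬(p ≤ a ∧ a ≤ p + (j - i)) ∧ ¬(p ≤ b ∧ b ≤ p + (j - i))

set_option synthInstance.maxSize 1000 in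
set_option synthInstance.maxHeartbeats 1000000 in
instance (n a b : ℕ) : Decidable (ExW n a b) := by
  unfold ExW; infer_instance

lemma exW_not_att2 {n a b : ℕ} (h : ExW n a b) : ¬ Att2 n a b := by
  obtain ⟨i, hi, j, hj, hij, hw⟩ := h
  intro hatt
  obtain ⟨p, hpb, hc, ht⟩ := hatt i j hij hj
  have := hw p (by omega) ⟨hpb, hc⟩
  rcases ht with h | h
  · exact this.1 h
  · exact this.2 h

lemma sing_base : ∀ n < 12, 6 ≤ n → ∀ s < n, ExW n s s := by decide

lemma no_sing : ∀ n, 6 ≤ n → ∀ s, ¬ Att2 n s s := by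
  intro n
  induction n using Nat.strong_induction_on with
  | _ n ih =>
    intro hn s hatt
    by_cases h12 : n < 12
    · -- reduce to s < n
      by_cases hs : s < n
      · exact exW_not_att2 (sing_base n h12 hn s hs) hatt
      · obtain ⟨p, hpb, _, ht⟩ := hatt 0 1 (by omega) (by omega)
        omega
    · have := att2_half hatt
      exact ih (n / 2) (by omega) (by omega) (s / 2) this

end PDaux


namespace PDaux

def Avoid110 (x : ℕ) : Prop :=
  ∀ p, pdf p = 1 → pdf (p + 1) = 1 → pdf (p + 2) = 0 → ¬(p ≤ x ∧ x ≤ p + 2)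

def Avoid01011 (x : ℕ) : Prop :=
  ∀ p, pdf p = 0 → pdf (p + 2) = 0 → pdf (p + 4) = 1 → ¬(p ≤ x ∧ x ≤ p + 4)

lemma occ110 {p : ℕ} (h0 : pdf p = 1) (h2 : pdf (p + 2) = 0) :
    p % 4 = 3 ∧ nu2 (p + 1) % 2 = 0 := by
  have hodd : (p + 2) % 2 = 1 := pdf_eq_zero_odd h2
  have hp2 : p % 2 = 1 := by omega
  have h0' : pdf (p / 2) = 0 := by
    rw [pdf_odd hp2] at h0
    have := pdf_le_one (p / 2); omega
  have hhalf : (p / 2) % 2 = 1 := pdf_eq_zero_odd h0'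
  have hnu : nu2 (p + 1) % 2 = 0 := (pdf_one_iff p).mp h0
  exact ⟨by omega, hnu⟩

lemma occ01011 {p : ℕ} (h0 : pdf p = 0) (h2 : pdf (p + 2) = 0) (h4 : pdf (p + 4) = 1) :
    p % 4 = 3 ∧ nu2 (p + 1) % 2 = 1 := by
  have hodd : p % 2 = 1 := pdf_eq_zero_odd h0
  have hnu : nu2 (p + 1) % 2 = 1 := (pdf_zero_iff p).mp h0
  rcases (by omega : p % 4 = 1 ∨ p % 4 = 3) with h | h
  · exfalso
    have h4' : nu2 (p + 4 + 1) % 2 = 0 := (pdf_one_iff _).mp h4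
    rw [show p + 4 + 1 = p + 5 by omega] at h4'
    have : nu2 (p + 5) = 1 := nu2_two_mod_four (by omega)
    omega
  · exact ⟨h, hnu⟩

lemma avoid110_two {x : ℕ} (h : x % 4 = 2) : Avoid110 x := by
  intro p h0 h1 h2 hx
  have := (occ110 h0 h2).1
  omega

lemma avoid110_pow {k : ℕ} (hk : 2 ≤ k) (hodd : k % 2 = 1) : Avoid110 (2 ^ k - 1) := by
  intro p h0 h1 h2 hx
  obtain ⟨hp4, hnu⟩ := occ110 h0 h2
  have h4 : 2 ^ k % 4 = 0 := by
    have : (4:ℕ) ∣ 2 ^ k := by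
      have : (2:ℕ)^2 ∣ 2 ^ k := pow_dvd_pow 2 hk
      simpa using this
    omega
  have hpow : 4 ≤ 2 ^ k := by
    calc (4:ℕ) = 2 ^ 2 := rfl
    _ ≤ 2 ^ k := Nat.pow_le_pow_right (by norm_num) hk
  have hxp : 2 ^ k - 1 = p := by omega
  have : nu2 (p + 1) = k := by
    rw [show p + 1 = 2 ^ k by omega]
    exact nu2_pow k
  omega

lemma avoid01011_pow {k : ℕ} (hk : 2 ≤ k) (heven : k % 2 = 0) : Avoid01011 (2 ^ k - 1) := by
  intro p h0 h2 h4 hx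
  obtain ⟨hp4, hnu⟩ := occ01011 h0 h2 h4
  have hd4 : 2 ^ k % 4 = 0 := by
    have : (4:ℕ) ∣ 2 ^ k := by
      have : (2:ℕ)^2 ∣ 2 ^ k := pow_dvd_pow 2 hk
      simpa using this
    omega
  have hpow : 4 ≤ 2 ^ k := by
    calc (4:ℕ) = 2 ^ 2 := rfl
    _ ≤ 2 ^ k := Nat.pow_le_pow_right (by norm_num) hk
  have hcases : 2 ^ k - 1 = p ∨ 2 ^ k - 1 = p + 4 := by omega
  rcases hcases with h | h
  · have : nu2 (p + 1) = k := by
      rw [show p + 1 = 2 ^ k by omega]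
      exact nu2_pow k
    omega
  · -- p + 1 = 2^k - 4
    rcases (by omega : k = 2 ∨ 3 ≤ k) with hk2 | hk3
    · subst hk2; omega
    · have h8 : 2 ^ k % 8 = 0 := by
        have : (8:ℕ) ∣ 2 ^ k := by
          have : (2:ℕ)^3 ∣ 2 ^ k := pow_dvd_pow 2 hk3
          simpa using this
        omega
      have hpow8 : 8 ≤ 2 ^ k := by
        calc (8:ℕ) = 2 ^ 3 := rfl
        _ ≤ 2 ^ k := Nat.pow_le_pow_right (by norm_num) hk3
      have : nu2 (p + 1) = 2 := nu2_four_mod_eight (by omega)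
      omega

lemma avoid01011_two {x : ℕ} (hx4 : x % 4 = 2) (hnu : nu2 (x - 2) = 2) (hxge : 4 ≤ x) :
    Avoid01011 x := by
  intro p h0 h2 h4 hx
  obtain ⟨hp4, hnup⟩ := occ01011 h0 h2 h4
  have : x = p + 3 := by omega
  have : nu2 (p + 1) = 2 := by rw [show p + 1 = x - 2 by omega]; exact hnu
  omega

lemma kill110 {n x y : ℕ} (hn : 6 ≤ n) (hx : Avoid110 x) (hy : Avoid110 y) :
    ¬ Att2 n x y := by
  intro h
  obtain ⟨p, hpb, hc, ht⟩ := h 3 5 (by omega) (by omega)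
  have h0 : pdf (p + 0) = pdf (3 + 0) := hc 0 (by omega)
  have h1 : pdf (p + 1) = pdf (3 + 1) := hc 1 (by omega)
  have h2 : pdf (p + 2) = pdf (3 + 2) := hc 2 (by omega)
  simp only [Nat.add_zero] at h0
  have hv3 : pdf 3 = 1 := by decide
  have hv4 : pdf 4 = 1 := by decide
  have hv5 : pdf 5 = 0 := by decide
  rw [hv3] at h0
  rw [show (3:ℕ) + 1 = 4 by rfl, hv4] at h1
  rw [show (3:ℕ) + 2 = 5 by rfl, hv5] at h2
  have hd : (5:ℕ) - 3 = 2 := rfl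
  rw [hd] at ht
  rcases ht with h | h
  · exact hx p h0 h1 h2 h
  · exact hy p h0 h1 h2 h

lemma kill01011 {n x y : ℕ} (hn : 12 ≤ n) (hx : Avoid01011 x) (hy : Avoid01011 y) :
    ¬ Att2 n x y := by
  intro h
  obtain ⟨p, hpb, hc, ht⟩ := h 7 11 (by omega) (by omega)
  have h0 : pdf (p + 0) = pdf (7 + 0) := hc 0 (by omega)
  have h2 : pdf (p + 2) = pdf (7 + 2) := hc 2 (by omega)
  have h4 : pdf (p + 4) = pdf (7 + 4) := hc 4 (by omega)
  simp only [Nat.add_zero] at h0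
  have hv7 : pdf 7 = 0 := by decide
  have hv9 : pdf 9 = 0 := by decide
  have hv11 : pdf 11 = 1 := by decide
  rw [hv7] at h0
  rw [show (7:ℕ) + 2 = 9 by rfl, hv9] at h2
  rw [show (7:ℕ) + 4 = 11 by rfl, hv11] at h4
  have hd : (11:ℕ) - 7 = 4 := rfl
  rw [hd] at ht
  rcases ht with h | h
  · exact hx p h0 h2 h4 h
  · exact hy p h0 h2 h4 h

end PDaux


namespace PDaux
lemma lb_base0 : ∀ n < 8, 6 ≤ n → ∀ b < n, ∀ a < b, b - a ≤ 1 → ExW n a b := by decide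
set_option synthInstance.maxSize 2000 in
set_option synthInstance.maxHeartbeats 2000000 in
lemma lb_base1 : ∀ n < 16, 8 ≤ n → ∀ b < n, ∀ a < b,
    (b - a ≤ 1 ∨ (b - a = 2 ∧ ¬((a = 1 ∧ b = 3) ∨ (a = 3 ∧ b = 5))) ∨
      ((a % 2 = 0 ∨ b % 2 = 0) ∧ b - a ≤ 2)) → ExW n a b := by decide
set_option synthInstance.maxSize 2000 in
set_option synthInstance.maxHeartbeats 2000000 in
lemma lb_base2 : ∀ n < 16, 12 ≤ n → ∀ b < n, ∀ a < b,
    (b - a ≤ 3 ∨ (b - a = 4 ∧ ¬((a = 3 ∧ b = 7) ∨ (a = 7 ∧ b = 11))) ∨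
      ((a % 2 = 0 ∨ b % 2 = 0) ∧ b - a ≤ 4)) → ExW n a b := by decide
end PDaux


namespace PDaux

def Cl (k a b : ℕ) : Prop :=
  2 ^ k ≤ b - a ∧ ((a % 2 = 0 ∨ b % 2 = 0) → 2 ^ k + 1 ≤ b - a) ∧
  (b - a = 2 ^ k →
    ((a = 2 ^ k - 1 ∧ b = 2 ^ (k + 1) - 1) ∨ (a = 2 ^ (k + 1) - 1 ∧ b = 3 * 2 ^ k - 1)))

lemma pow2_mod4 {j : ℕ} (h : 2 ≤ j) : (2:ℕ) ^ j % 4 = 0 ∧ 4 ≤ 2 ^ j := by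
  constructor
  · have : (4:ℕ) ∣ 2 ^ j := by
      have : (2:ℕ) ^ 2 ∣ 2 ^ j := pow_dvd_pow 2 h
      simpa using this
    omega
  · calc (4:ℕ) = 2 ^ 2 := rfl
    _ ≤ 2 ^ j := Nat.pow_le_pow_right (by norm_num) h

lemma pow2_mod8 {j : ℕ} (h : 3 ≤ j) : (2:ℕ) ^ j % 8 = 0 ∧ 8 ≤ 2 ^ j := by
  constructor
  · have : (8:ℕ) ∣ 2 ^ j := by
      have : (2:ℕ) ^ 3 ∣ 2 ^ j := pow_dvd_pow 2 h
      simpa using this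
    omega
  · calc (8:ℕ) = 2 ^ 3 := rfl
    _ ≤ 2 ^ j := Nat.pow_le_pow_right (by norm_num) h

lemma cl_step {k n a b : ℕ} (hk : 1 ≤ k) (hn : 12 ≤ n) (hab : a < b)
    (hatt : Att2 n a b) (hC : Cl k (a / 2) (b / 2)) : Cl (k + 1) a b := by
  obtain ⟨c1, c2, c3⟩ := hC
  have hp2 : (2:ℕ) ^ (k + 1) = 2 * 2 ^ k := by ring
  have hp3 : (2:ℕ) ^ (k + 2) = 2 * 2 ^ (k + 1) := by ring
  have hp4 : (2:ℕ) ^ (k + 1 + 1) = 2 * 2 ^ (k + 1) := by ring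
  have hge : 2 ≤ (2:ℕ) ^ k := by
    calc (2:ℕ) = 2 ^ 1 := rfl
    _ ≤ 2 ^ k := Nat.pow_le_pow_right (by norm_num) hk
  have m41 := pow2_mod4 (j := k + 1) (by omega)
  have m42 := pow2_mod4 (j := k + 2) (by omega)
  rcases (by omega : a % 2 = 1 ∧ b % 2 = 1 ∨ a % 2 = 0 ∧ b % 2 = 0 ∨
      a % 2 = 0 ∧ b % 2 = 1 ∨ a % 2 = 1 ∧ b % 2 = 0) with hpar | hpar | hpar | hpar
  · -- odd odd
    have hd : b - a = 2 * (b / 2 - a / 2) := by omega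
    refine ⟨by omega, by omega, ?_⟩
    intro he
    have he' : b / 2 - a / 2 = 2 ^ k := by omega
    rcases c3 he' with ⟨h1, h2⟩ | ⟨h1, h2⟩
    · left; omega
    · right; omega
  · -- even even
    have hd : b - a = 2 * (b / 2 - a / 2) := by omega
    rcases (by omega : b / 2 - a / 2 = 2 ^ k ∨ 2 ^ k + 1 ≤ b / 2 - a / 2) with he | hgt
    · exfalso
      rcases c3 he with ⟨h1, h2⟩ | ⟨h1, h2⟩
      · exact kill110 (by omega) (avoid110_two (by omega)) (avoid110_two (by omega)) hatt
      · exact kill110 (by omega) (avoid110_two (by omega)) (avoid110_two (by omega)) hatt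
    · exact ⟨by omega, by omega, fun he => absurd he (by omega)⟩
  · -- a even, b odd
    have hd : b - a = 2 * (b / 2 - a / 2) + 1 := by omega
    exact ⟨by omega, by omega, fun he => absurd he (by omega)⟩
  · -- a odd, b even
    have hd : b - a + 1 = 2 * (b / 2 - a / 2) := by omega
    rcases (by omega : b / 2 - a / 2 = 2 ^ k ∨ 2 ^ k + 1 ≤ b / 2 - a / 2) with he | hgt
    · exfalso
      rcases c3 he with ⟨h1, h2⟩ | ⟨h1, h2⟩
      · -- (a, b) = (2^(k+1) - 1, 2^(k+2) - 2)
        have hae : a = 2 ^ (k + 1) - 1 := by omega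
        have hbe : b = 2 ^ (k + 2) - 2 := by omega
        rcases (by omega : (k + 1) % 2 = 1 ∨ (k + 1) % 2 = 0) with hpar2 | hpar2
        · refine kill110 (by omega) ?_ (avoid110_two (by omega)) hatt
          rw [hae]
          exact avoid110_pow (by omega) hpar2
        · refine kill01011 (by omega) ?_ ?_ hatt
          · rw [hae]
            exact avoid01011_pow (by omega) hpar2
          · have m8 := pow2_mod8 (j := k + 2) (by omega)
            refine avoid01011_two (by omega) ?_ (by omega)
            have : b - 2 = 2 ^ (k + 2) - 4 := by omega
            rw [this]
            exact nu2_four_mod_eight (by omega)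
      · -- (a, b) = (2^(k+2) - 1, 3*2^(k+1) - 2)
        have hae : a = 2 ^ (k + 2) - 1 := by omega
        have hbe : b = 3 * 2 ^ (k + 1) - 2 := by omega
        rcases (by omega : (k + 2) % 2 = 1 ∨ (k + 2) % 2 = 0) with hpar2 | hpar2
        · refine kill110 (by omega) ?_ (avoid110_two (by omega)) hatt
          rw [hae]
          exact avoid110_pow (by omega) hpar2
        · -- k even, k ≥ 2
          have hk2 : 2 ≤ k := by omega
          have m8 := pow2_mod8 (j := k + 1) (by omega)
          refine kill01011 (by omega) ?_ ?_ hatt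
          · rw [hae]
            exact avoid01011_pow (by omega) hpar2
          · refine avoid01011_two (by omega) ?_ (by omega)
            have : b - 2 = 3 * 2 ^ (k + 1) - 4 := by omega
            rw [this]
            exact nu2_four_mod_eight (by omega)
    · exact ⟨by omega, by omega, fun he => absurd he (by omega)⟩

lemma att2_drop {n a b : ℕ} (hbn : ¬ b < n) (hatt : Att2 n a b) : Att2 n a a := by
  intro i j hij hj
  obtain ⟨p, h1, h2, h3⟩ := hatt i j hij hj
  refine ⟨p, h1, h2, ?_⟩
  rcases h3 with h | h
  · exact Or.inl h
  · exfalso; omega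

theorem lower1 : ∀ n, 8 ≤ n → ∀ a b, a < b → Att2 n a b → Cl 1 a b := by
  intro n
  induction n using Nat.strong_induction_on with
  | _ n ih =>
    intro hn a b hab hatt
    by_cases h16 : n < 16
    · by_cases hbn : b < n
      · by_contra hC
        refine exW_not_att2 (lb_base1 n h16 hn b hbn a hab ?_) hatt
        unfold Cl at hC
        have e1 : (2:ℕ) ^ 1 = 2 := rfl
        have e2 : (2:ℕ) ^ (1 + 1) = 4 := rfl
        rw [e1, e2] at hC
        by_cases hM : (a = 1 ∧ b = 3) ∨ (a = 3 ∧ b = 5)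
        · exfalso
          apply hC
          refine ⟨by omega, by omega, fun _ => ?_⟩
          rcases hM with ⟨h1, h2⟩ | ⟨h1, h2⟩
          · left; omega
          · right; omega
        · -- derive the bad disjunction
          by_cases hs1 : b - a ≤ 1
          · exact Or.inl hs1
          · by_cases hs2 : b - a = 2
            · exact Or.inr (Or.inl ⟨hs2, hM⟩)
            · right; right
              constructor
              · by_contra hno
                apply hC
                refine ⟨by omega, by omega, fun he => ?_⟩
                exfalso
                -- b - a = 2 contradicts hs2
                omega
              · by_contra hno
                apply hC
                refine ⟨by omega, fun _ => by omega, fun he => ?_⟩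
                exfalso; omega
      · exact absurd (att2_drop hbn hatt) (no_sing n (by omega) a)
    · have hhalf := att2_half hatt
      by_cases heq : a / 2 = b / 2
      · exact absurd (heq ▸ hhalf) (no_sing (n / 2) (by omega) (b / 2))
      · have hle : a / 2 ≤ b / 2 := Nat.div_le_div_right hab.le
        have hlt : a / 2 < b / 2 := by omega
        have hC1 := ih (n / 2) (by omega) (by omega) _ _ hlt hhalf
        have hC2 := cl_step (le_refl 1) (by omega) hab hatt hC1
        obtain ⟨c1, c2, c3⟩ := hC2
        have e1 : (2:ℕ) ^ (1+1) = 4 := rfl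
        have e2 : (2:ℕ) ^ 1 = 2 := rfl
        refine ⟨by omega, by omega, fun he => ?_⟩
        exfalso; omega

theorem lowerK : ∀ k, 2 ≤ k → ∀ n, 3 * 2 ^ k ≤ n → ∀ a b, a < b → Att2 n a b → Cl k a b := by
  intro k
  induction k with
  | zero => omega
  | succ k ihk =>
    intro hk2 n
    by_cases hk2' : k < 2
    · -- k + 1 = 2
      have hke : k = 1 := by omega
      subst hke
      induction n using Nat.strong_induction_on with
      | _ n ih =>
        intro hn a b hab hatt
        have hn12 : 12 ≤ n := by norm_num at hn; omega
        by_cases h16 : n < 16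
        · by_cases hbn : b < n
          · by_contra hC
            refine exW_not_att2 (lb_base2 n h16 hn12 b hbn a hab ?_) hatt
            unfold Cl at hC
            have e1 : (2:ℕ) ^ 2 = 4 := rfl
            have e2 : (2:ℕ) ^ (2 + 1) = 8 := rfl
            rw [e1, e2] at hC
            by_cases hM : (a = 3 ∧ b = 7) ∨ (a = 7 ∧ b = 11)
            · exfalso
              apply hC
              refine ⟨by omega, by omega, fun _ => ?_⟩
              rcases hM with ⟨h1, h2⟩ | ⟨h1, h2⟩
              · left; omega
              · right; omega
            · by_cases hs1 : b - a ≤ 3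
              · exact Or.inl hs1
              · by_cases hs2 : b - a = 4
                · exact Or.inr (Or.inl ⟨hs2, hM⟩)
                · right; right
                  constructor
                  · by_contra hno
                    apply hC
                    refine ⟨by omega, by omega, fun he => by exfalso; omega⟩
                  · by_contra hno
                    apply hC
                    refine ⟨by omega, fun _ => by omega, fun he => by exfalso; omega⟩
          · exact absurd (att2_drop hbn hatt) (no_sing n (by omega) a)
        · have hhalf := att2_half hatt
          by_cases heq : a / 2 = b / 2
          · exact absurd (heq ▸ hhalf) (no_sing (n / 2) (by omega) (b / 2))
          · have hle : a / 2 ≤ b / 2 := Nat.div_le_div_right hab.le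
            have hlt : a / 2 < b / 2 := by omega
            have hC1 := lower1 (n / 2) (by omega) _ _ hlt hhalf
            exact cl_step (le_refl 1) (by omega) hab hatt hC1
    · -- k ≥ 2, step
      intro hn a b hab hatt
      have hkk : 2 ≤ k := by omega
      have hp : (2:ℕ) ^ (k + 1) = 2 * 2 ^ k := by ring
      have hge : 4 ≤ (2:ℕ) ^ k := (pow2_mod4 hkk).2
      have hhalf := att2_half hatt
      by_cases heq : a / 2 = b / 2
      · exact absurd (heq ▸ hhalf) (no_sing (n / 2) (by omega) (b / 2))
      · have hle : a / 2 ≤ b / 2 := Nat.div_le_div_right hab.le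
        have hlt : a / 2 < b / 2 := by omega
        have hC1 := ihk hkk (n / 2) (by omega) _ _ hlt hhalf
        exact cl_step (by omega) (by omega) hab hatt hC1

end PDaux


/-- The minimum size of a string attractor of `pd[0..n-1]`. -/
noncomputable def gammaPD (n : ℕ) : ℕ :=
  sInf {k | ∃ S : Finset ℕ, IsAttractor pd n S ∧ S.card = k}

/-- The minimum span (`max S - min S`) over all string attractors of minimum
cardinality of `pd[0..n-1]`. -/
noncomputable def minspanPD (n : ℕ) : ℕ :=
  sInf {r | ∃ S : Finset ℕ, IsAttractor pd n S ∧ S.card = gammaPD n ∧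
    ∃ a ∈ S, ∃ b ∈ S, (∀ x ∈ S, a ≤ x ∧ x ≤ b) ∧ r = b - a}


namespace PDaux

lemma main_pair {i n : ℕ} (hi : 1 ≤ i) (h1 : 3 * 2 ^ i ≤ n) (h2 : n < 3 * 2 ^ (i + 1)) :
    ∃ a b, a < b ∧ b - a = 2 ^ i ∧ b + 2 ≤ n ∧ AttP n a b := by
  have hp : (2:ℕ) ^ (i + 1) = 2 * 2 ^ i := by ring
  have hp2 : (2:ℕ) ^ (i + 2) = 4 * 2 ^ i := by ring
  have hge : 2 ≤ (2:ℕ) ^ i := by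
    calc (2:ℕ) = 2 ^ 1 := rfl
    _ ≤ 2 ^ i := Nat.pow_le_pow_right (by norm_num) hi
  rcases Nat.lt_or_ge n (2 ^ (i + 2)) with hc | hc
  · have hinv := (fam n i hi).1 h1 hc
    exact ⟨2 ^ i - 1, 2 ^ (i + 1) - 1, hinv.1, by omega, hinv.2.1, inv4_attP hinv⟩
  · have hinv := (fam n i hi).2 hc h2
    exact ⟨2 ^ (i + 1) - 1, 3 * 2 ^ i - 1, hinv.1, by omega, hinv.2.1, inv4_attP hinv⟩

lemma range_of_log {n : ℕ} (hn : 6 ≤ n) :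
    1 ≤ Nat.log 2 (n / 3) ∧ 3 * 2 ^ Nat.log 2 (n / 3) ≤ n ∧
      n < 3 * 2 ^ (Nat.log 2 (n / 3) + 1) := by
  set i := Nat.log 2 (n / 3) with hi
  have h1 : 2 ^ i ≤ n / 3 := Nat.pow_log_le_self 2 (by omega)
  have h2 : n / 3 < 2 ^ (i + 1) := Nat.lt_pow_succ_log_self (by norm_num) _
  have hi1 : 1 ≤ i := by
    rcases Nat.eq_zero_or_pos i with h | h
    · rw [h] at h2
      norm_num at h2
      omega
    · omega
  exact ⟨hi1, by omega, by omega⟩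

lemma attractor_pair {n : ℕ} (hn : 2 ≤ n) :
    ∃ a b, a < b ∧ b < n ∧ AttP n a b := by
  rcases (by omega : n = 2 ∨ n = 3 ∨ n = 4 ∨ n = 5 ∨ 6 ≤ n) with h | h | h | h | h
  · exact ⟨0, 1, by omega, by omega, h ▸ attP_small.2.1⟩
  · exact ⟨0, 1, by omega, by omega, h ▸ attP_small.2.2.1⟩
  · exact ⟨1, 2, by omega, by omega, h ▸ attP_small.2.2.2.1⟩
  · exact ⟨1, 2, by omega, by omega, h ▸ attP_small.2.2.2.2⟩
  · obtain ⟨hi, h1, h2⟩ := range_of_log h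
    obtain ⟨a, b, hab, _, hb2, hatt⟩ := main_pair hi h1 h2
    exact ⟨a, b, hab, by omega, hatt⟩

lemma pdf01 : pdf 0 = 1 ∧ pdf 1 = 0 := by decide

lemma attractor_card_ge_two {n : ℕ} (hn : 2 ≤ n) {S : Finset ℕ}
    (hS : IsAttractor pdf n S) : 2 ≤ S.card := by
  obtain ⟨i', j', hij, hjn, hd, hc, s, hsS, hs1, hs2⟩ := hS.2 0 0 le_rfl (by omega)
  obtain ⟨i2, j2, hij2, hjn2, hd2, hc2, s2, hs2S, hs21, hs22⟩ := hS.2 1 1 le_rfl (by omega)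
  have hv1 : pdf s = 1 := by
    have h := hc 0 (by omega)
    simp only [Nat.add_zero] at h
    have hsi : s = i' := by omega
    rw [hsi, h]
    exact pdf01.1
  have hv2 : pdf s2 = 0 := by
    have h := hc2 0 (by omega)
    simp only [Nat.add_zero] at h
    have hsi : s2 = i2 := by omega
    rw [hsi, h]
    exact pdf01.2
  have hne : s ≠ s2 := by intro h; rw [h, hv2] at hv1; exact absurd hv1 (by norm_num)
  have hsub : ({s, s2} : Finset ℕ) ⊆ S := by
    intro x hx
    simp only [Finset.mem_insert, Finset.mem_singleton] at hx
    rcases hx with h | h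
    · exact h ▸ hsS
    · exact h ▸ hs2S
  calc 2 = ({s, s2} : Finset ℕ).card := (Finset.card_pair hne).symm
  _ ≤ S.card := Finset.card_le_card hsub

lemma gamma_two {n : ℕ} (hn : 2 ≤ n) : gammaPD n = 2 := by
  obtain ⟨a, b, hab, hbn, hatt⟩ := attractor_pair hn
  have hA : IsAttractor pd n ({a, b} : Finset ℕ) := by
    rw [pd_eq_pdf]
    exact attP_isAttractor (by omega) hbn hatt
  have hmem : 2 ∈ {k | ∃ S : Finset ℕ, IsAttractor pd n S ∧ S.card = k} :=
    ⟨{a, b}, hA, Finset.card_pair (by omega)⟩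
  have hne : {k | ∃ S : Finset ℕ, IsAttractor pd n S ∧ S.card = k}.Nonempty := ⟨2, hmem⟩
  have hlow : ∀ k ∈ {k | ∃ S : Finset ℕ, IsAttractor pd n S ∧ S.card = k}, 2 ≤ k := by
    rintro k ⟨S, hS, rfl⟩
    rw [pd_eq_pdf] at hS
    exact attractor_card_ge_two hn hS
  exact le_antisymm (Nat.sInf_le hmem) (hlow _ (Nat.sInf_mem hne))

lemma minspan_mem {n a b : ℕ} (hab : a < b) (hbn : b < n) (hatt : AttP n a b)
    (hg : gammaPD n = 2) :
    (b - a) ∈ {r | ∃ S : Finset ℕ, IsAttractor pd n S ∧ S.card = gammaPD n ∧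
      ∃ x ∈ S, ∃ y ∈ S, (∀ z ∈ S, x ≤ z ∧ z ≤ y) ∧ r = y - x} := by
  refine ⟨{a, b}, ?_, by rw [hg]; exact Finset.card_pair (by omega), a, ?_, b, ?_, ?_, rfl⟩
  · rw [pd_eq_pdf]
    exact attP_isAttractor (by omega) hbn hatt
  · simp
  · simp
  · intro z hz
    simp only [Finset.mem_insert, Finset.mem_singleton] at hz
    rcases hz with h | h <;> omega

lemma minspan_elim {n r : ℕ} (hg : gammaPD n = 2)
    (hr : r ∈ {r | ∃ S : Finset ℕ, IsAttractor pd n S ∧ S.card = gammaPD n ∧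
      ∃ x ∈ S, ∃ y ∈ S, (∀ z ∈ S, x ≤ z ∧ z ≤ y) ∧ r = y - x}) :
    ∃ a b, a < b ∧ b < n ∧ r = b - a ∧ Att2 n a b := by
  obtain ⟨S, hS, hcard, a, haS, b, hbS, hbound, hre⟩ := hr
  rw [hg] at hcard
  rw [pd_eq_pdf] at hS
  have hal : a ≤ b := (hbound b hbS).1
  have hane : a ≠ b := by
    intro h
    have hsub : S ⊆ {a} := by
      intro x hx
      have := hbound x hx
      simp only [Finset.mem_singleton]
      omega
    have := Finset.card_le_card hsub
    simp at this
    omega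
  have hab : a < b := by omega
  have hSeq : ({a, b} : Finset ℕ) = S := by
    apply Finset.eq_of_subset_of_card_le
    · intro x hx
      simp only [Finset.mem_insert, Finset.mem_singleton] at hx
      rcases hx with h | h
      · exact h ▸ haS
      · exact h ▸ hbS
    · rw [hcard, Finset.card_pair (by omega)]
  have hbn : b < n := hS.1 b hbS
  refine ⟨a, b, hab, hbn, hre, ?_⟩
  intro i j hij hj
  obtain ⟨i', j', hij', hjn', hd, hc, s, hsS, hs1, hs2⟩ := hS.2 i j hij.le hj
  refine ⟨i', by omega, fun t ht => hc t ht, ?_⟩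
  rw [← hSeq] at hsS
  simp only [Finset.mem_insert, Finset.mem_singleton] at hsS
  rcases hsS with h | h
  · exact Or.inl (by omega)
  · exact Or.inr (by omega)

lemma minspan_eq {n i : ℕ} (hi : 1 ≤ i) (h1 : 3 * 2 ^ i ≤ n) (h2 : n < 3 * 2 ^ (i + 1)) :
    minspanPD n = 2 ^ i := by
  have hge : 2 ≤ (2:ℕ) ^ i := by
    calc (2:ℕ) = 2 ^ 1 := rfl
    _ ≤ 2 ^ i := Nat.pow_le_pow_right (by norm_num) hi
  have hn6 : 6 ≤ n := by omega
  have hg := gamma_two (n := n) (by omega)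
  obtain ⟨a, b, hab, hspan, hb2, hatt⟩ := main_pair hi h1 h2
  have hmem := minspan_mem hab (by omega) hatt hg
  rw [hspan] at hmem
  have hlow : ∀ r ∈ {r | ∃ S : Finset ℕ, IsAttractor pd n S ∧ S.card = gammaPD n ∧
      ∃ x ∈ S, ∃ y ∈ S, (∀ z ∈ S, x ≤ z ∧ z ≤ y) ∧ r = y - x}, 2 ^ i ≤ r := by
    intro r hr
    obtain ⟨x, y, hxy, hyn, hre, hatt2⟩ := minspan_elim hg hr
    rcases (by omega : i = 1 ∨ 2 ≤ i) with hi1 | hi2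
    · subst hi1
      rcases Nat.lt_or_ge n 8 with h8 | h8
      · -- n ∈ {6, 7}
        norm_num
        by_contra hc
        have hy1 : y = x + 1 := by omega
        exact exW_not_att2 (lb_base0 n h8 hn6 y hyn x hxy (by omega)) hatt2
      · have hcl := lower1 n h8 x y hxy hatt2
        have := hcl.1
        norm_num at this ⊢
        omega
    · have hcl := lowerK i hi2 n h1 x y hxy hatt2
      have := hcl.1
      omega
  have hne : Set.Nonempty {r | ∃ S : Finset ℕ, IsAttractor pd n S ∧ S.card = gammaPD n ∧
      ∃ x ∈ S, ∃ y ∈ S, (∀ z ∈ S, x ≤ z ∧ z ≤ y) ∧ r = y - x} := ⟨_, hmem⟩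
  exact le_antisymm (Nat.sInf_le hmem) (hlow _ (Nat.sInf_mem hne))

lemma gamma_one : gammaPD 1 = 1 := by
  have hA : IsAttractor pd 1 ({0} : Finset ℕ) := by
    rw [pd_eq_pdf]
    have h := attP_isAttractor (n := 1) (a := 0) (b := 0) (by omega) (by omega) attP_small.1
    simpa using h
  have hmem : 1 ∈ {k | ∃ S : Finset ℕ, IsAttractor pd 1 S ∧ S.card = k} :=
    ⟨{0}, hA, rfl⟩
  have h0 : 0 ∉ {k | ∃ S : Finset ℕ, IsAttractor pd 1 S ∧ S.card = k} := by
    rintro ⟨S, hS, hc⟩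
    rw [Finset.card_eq_zero] at hc
    subst hc
    obtain ⟨i', j', _, _, _, _, s, hs, _, _⟩ := hS.2 0 0 le_rfl (by omega)
    simp at hs
  have hinf := Nat.sInf_mem (⟨1, hmem⟩ : Set.Nonempty _)
  have hle := Nat.sInf_le hmem
  show sInf {k | ∃ S : Finset ℕ, IsAttractor pd 1 S ∧ S.card = k} = 1
  rcases (by omega :
      sInf {k | ∃ S : Finset ℕ, IsAttractor pd 1 S ∧ S.card = k} = 0 ∨
      sInf {k | ∃ S : Finset ℕ, IsAttractor pd 1 S ∧ S.card = k} = 1) with h | h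
  · exact absurd (h ▸ hinf) h0
  · exact h

lemma minspan_one : minspanPD 1 = 0 := by
  apply Nat.sInf_eq_zero.mpr
  left
  refine ⟨{0}, ?_, by rw [gamma_one]; rfl, 0, by simp, 0, by simp, ?_, rfl⟩
  · rw [pd_eq_pdf]
    have h := attP_isAttractor (n := 1) (a := 0) (b := 0) (by omega) (by omega) attP_small.1
    simpa using h
  · intro z hz
    simp at hz
    omega

lemma minspan_small {n : ℕ} (h2 : 2 ≤ n) (h5 : n < 5) : minspanPD n = 1 := by
  have hg := gamma_two h2
  have hpair : ∃ a b, a < b ∧ b < n ∧ b - a = 1 ∧ AttP n a b := by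
    rcases (by omega : n = 2 ∨ n = 3 ∨ n = 4) with h | h | h
    · exact ⟨0, 1, by omega, by omega, by omega, h ▸ attP_small.2.1⟩
    · exact ⟨0, 1, by omega, by omega, by omega, h ▸ attP_small.2.2.1⟩
    · exact ⟨1, 2, by omega, by omega, by omega, h ▸ attP_small.2.2.2.1⟩
  obtain ⟨a, b, hab, hbn, hspan, hatt⟩ := hpair
  have hmem := minspan_mem hab hbn hatt hg
  rw [hspan] at hmem
  have hlow : ∀ r ∈ {r | ∃ S : Finset ℕ, IsAttractor pd n S ∧ S.card = gammaPD n ∧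
      ∃ x ∈ S, ∃ y ∈ S, (∀ z ∈ S, x ≤ z ∧ z ≤ y) ∧ r = y - x}, 1 ≤ r := by
    intro r hr
    obtain ⟨x, y, hxy, _, hre, _⟩ := minspan_elim hg hr
    omega
  exact le_antisymm (Nat.sInf_le hmem) (hlow _ (Nat.sInf_mem ⟨_, hmem⟩))

end PDaux



/-- For the period-doubling sequence, the minimum string attractor cardinality is
2 for prefixes of length ≥ 2, and the minimum span of a minimum-cardinality
string attractor of the length-`n` prefix equals 0 for `n = 1`, 1 for
`2 ≤ n < 5`, and `2^i` for `3·2^i ≤ n < 3·2^(i+1)` with `i ≥ 1`. -/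
theorem pd_minspan :
    (∀ n : ℕ, 2 ≤ n → gammaPD n = 2) ∧
    minspanPD 1 = 0 ∧
    (∀ n : ℕ, 2 ≤ n → n < 5 → minspanPD n = 1) ∧
    (∀ i : ℕ, 1 ≤ i → ∀ n : ℕ, 3 * 2 ^ i ≤ n → n < 3 * 2 ^ (i + 1) →
      minspanPD n = 2 ^ i) := by
  refine ⟨fun n hn => PDaux.gamma_two hn, PDaux.minspan_one,
    fun n h2 h5 => PDaux.minspan_small h2 h5,
    fun i hi n h1 h2 => PDaux.minspan_eq hi h1 h2⟩
end
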